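/- arXiv:2504.05733 — 7 statements merged into one kernel-verified Lean document; each statement's English description precedes it below -/
import Mathlib

section
/- For a smooth regular evolution of space curves γ, the length element satisfies ∂tℓ = ∂sa − bℓκ everywhere. -/
noncomputable section
open RealInnerProductSpace

/-- Euclidean three-space. -/
abbrev E3 := EuclideanSpace ℝ (Fin 3)

/-- The cross product on `ℝ³`. -/
def cross3 (x y : E3) : E3 :=
  (WithLp.equiv 2 (Fin 3 → ℝ)).symm
    ![x 1 * y 2 - x 2 * y 1, x 2 * y 0 - x 0 * y 2, x 0 * y 1 - x 1 * y 0]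

/-- Partial derivative with respect to the first variable `s`. -/
def pdS {E : Type*} [NormedAddCommGroup E] [NormedSpace ℝ E] (f : ℝ × ℝ → E) (p : ℝ × ℝ) : E :=
  fderiv ℝ f p (1, 0)

/-- Partial derivative with respect to the second variable `t`. -/
def pdT {E : Type*} [NormedAddCommGroup E] [NormedSpace ℝ E] (f : ℝ × ℝ → E) (p : ℝ × ℝ) : E :=
  fderiv ℝ f p (0, 1)

/-- The unit tangent vector `T = ∂sγ/‖∂sγ‖`. -/
def Tv (γ : ℝ × ℝ → E3) (p : ℝ × ℝ) : E3 := ‖pdS γ p‖⁻¹ • pdS γ p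

/-- The binormal vector `B = (∂sγ × ∂s∂sγ)/‖∂sγ × ∂s∂sγ‖`. -/
def Bv (γ : ℝ × ℝ → E3) (p : ℝ × ℝ) : E3 :=
  ‖cross3 (pdS γ p) (pdS (pdS γ) p)‖⁻¹ • cross3 (pdS γ p) (pdS (pdS γ) p)

/-- The principal normal vector `N = B × T`. -/
def Nv (γ : ℝ × ℝ → E3) (p : ℝ × ℝ) : E3 := cross3 (Bv γ p) (Tv γ p)

/-- The curvature `κ = ‖∂sγ × ∂s∂sγ‖/‖∂sγ‖³`. -/
def curv (γ : ℝ × ℝ → E3) (p : ℝ × ℝ) : ℝ :=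
  ‖cross3 (pdS γ p) (pdS (pdS γ) p)‖ / ‖pdS γ p‖ ^ 3

/-- The torsion `τ = ⟨∂sγ × ∂s∂sγ, ∂s∂s∂sγ⟩/‖∂sγ × ∂s∂sγ‖²`. -/
def tors (γ : ℝ × ℝ → E3) (p : ℝ × ℝ) : ℝ :=
  ⟪cross3 (pdS γ p) (pdS (pdS γ) p), pdS (pdS (pdS γ)) p⟫ /
    ‖cross3 (pdS γ p) (pdS (pdS γ) p)‖ ^ 2

/-- The length element `ℓ = ‖∂sγ‖`. -/
def lenE (γ : ℝ × ℝ → E3) (p : ℝ × ℝ) : ℝ := ‖pdS γ p‖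

/-- The coefficient `a = ⟨∂tγ, T⟩`. -/
def ca (γ : ℝ × ℝ → E3) (p : ℝ × ℝ) : ℝ := ⟪pdT γ p, Tv γ p⟫

/-- The coefficient `b = ⟨∂tγ, N⟩`. -/
def cb (γ : ℝ × ℝ → E3) (p : ℝ × ℝ) : ℝ := ⟪pdT γ p, Nv γ p⟫

/-- The coefficient `c = ⟨∂tγ, B⟩`. -/
def cc (γ : ℝ × ℝ → E3) (p : ℝ × ℝ) : ℝ := ⟪pdT γ p, Bv γ p⟫

/-- Regularity of the evolution: `∂sγ ≠ 0` and `∂sγ × ∂s∂sγ ≠ 0` everywhere. -/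
def RegularEvolution (γ : ℝ × ℝ → E3) : Prop :=
  ∀ p : ℝ × ℝ, pdS γ p ≠ 0 ∧ cross3 (pdS γ p) (pdS (pdS γ) p) ≠ 0


/-- Cross-product / inner-product identity `⟨w, (v×u)×v⟩ = ⟨v,v⟩⟨w,u⟩ − ⟨v,u⟩⟨w,v⟩`. -/
lemma inner_cross3_cross3 (v u w : E3) :
    ⟪w, cross3 (cross3 v u) v⟫ = ⟪v, v⟫ * ⟪w, u⟫ - ⟪v, u⟫ * ⟪w, v⟫ := by
  simp [cross3, PiLp.inner_apply, Fin.sum_univ_three, RCLike.inner_apply,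
    EuclideanSpace.real_norm_sq_eq]
  ring

/-- Bilinearity of `cross3` with respect to scalars. -/
lemma cross3_smul_smul (r s : ℝ) (x y : E3) :
    cross3 (r • x) (s • y) = (r * s) • cross3 x y := by
  ext i
  fin_cases i <;>
    simp [cross3, PiLp.smul_apply, smul_eq_mul] <;> ring

lemma contDiff_pd {f : ℝ × ℝ → E3} (hf : ContDiff ℝ (⊤ : ℕ∞) f) (u : ℝ × ℝ) :
    ContDiff ℝ (⊤ : ℕ∞) (fun q => fderiv ℝ f q u) :=
  (ContinuousLinearMap.apply ℝ E3 u).contDiff.comp (hf.fderiv_right (by simp))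

lemma pd_eval {f : ℝ × ℝ → E3} (hf : ContDiff ℝ (⊤ : ℕ∞) f) (u : ℝ × ℝ) (p v : ℝ × ℝ) :
    fderiv ℝ (fun q => fderiv ℝ f q u) p v = fderiv ℝ (fderiv ℝ f) p v u := by
  have h'' : HasFDerivAt (fderiv ℝ f) (fderiv ℝ (fderiv ℝ f) p) p :=
    ((hf.fderiv_right (m := (⊤ : ℕ∞)) (by simp)).differentiable (by simp) p).hasFDerivAt
  have h : HasFDerivAt (fun q => fderiv ℝ f q u)
      ((ContinuousLinearMap.apply ℝ E3 u).comp (fderiv ℝ (fderiv ℝ f) p)) p :=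
    (ContinuousLinearMap.apply ℝ E3 u).hasFDerivAt.comp p h''
  rw [h.fderiv]; rfl

/-- Mixed partial derivatives commute for smooth maps. -/
lemma pd_comm {f : ℝ × ℝ → E3} (hf : ContDiff ℝ (⊤ : ℕ∞) f) (p : ℝ × ℝ) :
    pdT (pdS f) p = pdS (pdT f) p := by
  have h'' : HasFDerivAt (fderiv ℝ f) (fderiv ℝ (fderiv ℝ f) p) p :=
    ((hf.fderiv_right (m := (⊤ : ℕ∞)) (by simp)).differentiable (by simp) p).hasFDerivAt
  have key := second_derivative_symmetric
    (fun y => (hf.differentiable (by simp) y).hasFDerivAt) h'' ((1:ℝ),(0:ℝ)) ((0:ℝ),(1:ℝ))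
  unfold pdS pdT
  rw [pd_eval hf _ p, pd_eval hf _ p]
  exact key.symm

/-- Derivative of the norm of a nonvanishing function. -/
lemma hasFDerivAt_norm_comp {f : ℝ × ℝ → E3} {f' : ℝ × ℝ →L[ℝ] E3} {x : ℝ × ℝ}
    (hf : HasFDerivAt f f' x) (h0 : f x ≠ 0) :
    HasFDerivAt (fun y => ‖f y‖) (‖f x‖⁻¹ • ((innerSL ℝ (f x)).comp f')) x := by
  have hm : ‖f x‖ ≠ 0 := norm_ne_zero_iff.2 h0
  have h1 : HasFDerivAt (fun y => ‖f y‖ ^ 2) (2 • (innerSL ℝ (f x)).comp f') x := hf.norm_sq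
  have h2 : (‖f x‖ : ℝ) ^ 2 ≠ 0 := pow_ne_zero _ hm
  have h3 := h1.sqrt h2
  have he : (fun y => Real.sqrt (‖f y‖ ^ 2)) = fun y => ‖f y‖ := by
    funext y; rw [Real.sqrt_sq (norm_nonneg _)]
  rw [he] at h3
  have hEq : (1 / (2 * Real.sqrt (‖f x‖ ^ 2))) • (2 • (innerSL ℝ (f x)).comp f')
      = ‖f x‖⁻¹ • ((innerSL ℝ (f x)).comp f') := by
    rw [Real.sqrt_sq (norm_nonneg _)]
    refine ContinuousLinearMap.ext fun u => ?_
    simp only [ContinuousLinearMap.smul_apply, smul_eq_mul, nsmul_eq_mul, Nat.cast_ofNat]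
    field_simp
  rw [hEq] at h3
  exact h3

set_option maxHeartbeats 1000000 in
set_option synthInstance.maxHeartbeats 400000 in
/-- For a smooth regular evolution of space curves `γ`, the length element satisfies
`∂tℓ = ∂sa − bℓκ` everywhere. -/
theorem length_element_evolution (γ : ℝ × ℝ → E3)
    (hγ : ContDiff ℝ (⊤ : ℕ∞) γ) (hreg : RegularEvolution γ) :
    ∀ p : ℝ × ℝ,
      pdT (lenE γ) p = pdS (ca γ) p - cb γ p * lenE γ p * curv γ p := by
  intro p
  obtain ⟨hv0, hc0⟩ := hreg p
  -- abbreviations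
  set v : E3 := pdS γ p with hv
  set vs : E3 := pdS (pdS γ) p with hvs
  set w : E3 := pdT γ p with hw
  have hm : ‖v‖ ≠ 0 := norm_ne_zero_iff.2 hv0
  have hnc : ‖cross3 v vs‖ ≠ 0 := norm_ne_zero_iff.2 hc0
  -- smoothness of the partial derivatives
  have hS : ContDiff ℝ (⊤ : ℕ∞) (pdS γ) := contDiff_pd hγ (1, 0)
  have hT : ContDiff ℝ (⊤ : ℕ∞) (pdT γ) := contDiff_pd hγ (0, 1)
  set D1 : ℝ × ℝ →L[ℝ] E3 := fderiv ℝ (pdS γ) p with hD1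
  set D2 : ℝ × ℝ →L[ℝ] E3 := fderiv ℝ (pdT γ) p with hD2
  have hdS : HasFDerivAt (pdS γ) D1 p := (hS.differentiable (by simp) p).hasFDerivAt
  have hdT : HasFDerivAt (pdT γ) D2 p := (hT.differentiable (by simp) p).hasFDerivAt
  have hD1s : D1 (1, 0) = vs := rfl
  have hD1t : D1 (0, 1) = pdT (pdS γ) p := rfl
  have hD2s : D2 (1, 0) = pdS (pdT γ) p := rfl
  -- the mixed partials agree
  have hmix : D1 (0, 1) = D2 (1, 0) := by
    rw [hD1t, hD2s]; exact pd_comm hγ p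
  -- derivative of the length element
  have hL : HasFDerivAt (fun y => ‖pdS γ y‖) (‖v‖⁻¹ • ((innerSL ℝ v).comp D1)) p :=
    hasFDerivAt_norm_comp hdS hv0
  have hlen : HasFDerivAt (lenE γ) (‖v‖⁻¹ • ((innerSL ℝ v).comp D1)) p := hL
  have hLHS : pdT (lenE γ) p = ‖v‖⁻¹ * ⟪v, D2 (1, 0)⟫ := by
    show fderiv ℝ (lenE γ) p (0, 1) = _
    rw [hlen.fderiv, ← hmix]
    simp
  -- derivative of the inverse length
  have hinv : HasFDerivAt (fun y => ‖pdS γ y‖⁻¹)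
      ((-(‖v‖ ^ 2)⁻¹) • (‖v‖⁻¹ • ((innerSL ℝ v).comp D1))) p :=
    (hasDerivAt_inv hm).comp_hasFDerivAt p hL
  -- derivative of the unit tangent
  set TvD : ℝ × ℝ →L[ℝ] E3 :=
    ‖v‖⁻¹ • D1 + ((-(‖v‖ ^ 2)⁻¹) • (‖v‖⁻¹ • ((innerSL ℝ v).comp D1))).smulRight v with hTvD
  have hTv : HasFDerivAt (Tv γ) TvD p := hinv.smul hdS
  have hTvp : Tv γ p = ‖v‖⁻¹ • v := rfl
  -- value of the tangent derivative in direction s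
  have hTvDs : TvD (1, 0) = ‖v‖⁻¹ • vs + (-(‖v‖ ^ 2)⁻¹ * (‖v‖⁻¹ * ⟪v, vs⟫)) • v := by
    rw [hTvD]
    simp only [ContinuousLinearMap.add_apply, ContinuousLinearMap.coe_smul', Pi.smul_apply,
      ContinuousLinearMap.smulRight_apply, ContinuousLinearMap.smul_apply,
      ContinuousLinearMap.comp_apply, innerSL_apply_apply, hD1s, smul_eq_mul, smul_smul]
    ring_nf
  -- derivative of a
  have hca : HasFDerivAt (ca γ)
      ((fderivInnerCLM ℝ (w, Tv γ p)).comp (D2.prod TvD)) p := hdT.inner ℝ hTv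
  have hcaS : pdS (ca γ) p
      = ⟪w, TvD (1, 0)⟫ + ⟪D2 (1, 0), ‖v‖⁻¹ • v⟫ := by
    show fderiv ℝ (ca γ) p (1, 0) = _
    rw [hca.fderiv]
    rw [ContinuousLinearMap.comp_apply, fderivInnerCLM_apply, hTvp]
    rfl
  -- the b ℓ κ term
  have hNv : Nv γ p = (‖cross3 v vs‖⁻¹ * ‖v‖⁻¹) • cross3 (cross3 v vs) v := by
    show cross3 (Bv γ p) (Tv γ p) = _
    have hB : Bv γ p = ‖cross3 v vs‖⁻¹ • cross3 v vs := rfl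
    rw [hB, hTvp, cross3_smul_smul]
  have hcb : cb γ p = (‖cross3 v vs‖⁻¹ * ‖v‖⁻¹) *
      (⟪v, v⟫ * ⟪w, vs⟫ - ⟪v, vs⟫ * ⟪w, v⟫) := by
    show ⟪w, Nv γ p⟫ = _
    rw [hNv, real_inner_smul_right, inner_cross3_cross3]
  have hcurv : curv γ p = ‖cross3 v vs‖ / ‖v‖ ^ 3 := rfl
  have hlenp : lenE γ p = ‖v‖ := rfl
  -- put everything together
  rw [hLHS, hcaS, hcb, hcurv, hlenp, hTvDs]
  rw [inner_add_right, real_inner_smul_right, real_inner_smul_right,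
    real_inner_smul_right]
  rw [real_inner_self_eq_norm_sq, real_inner_comm (D2 (1, 0)) v]
  field_simp
  ring
end
end

section
/- Let γ be a smooth regular evolution of space curves with ‖∂sγ‖ = 1 everywhere. Then γ satisfies the Lund-Regge evolution equation ∂s∂tγ = ∂sγ × ∂tγ if and only if the Frenet coefficients a, b, c of ∂tγ satisfy the three equations ∂sa − bκ = 0, ∂sb + aκ − cτ = −c, and ∂sc + bτ = b everywhere. -/
noncomputable section
open RealInnerProductSpace

/-! ### Coordinate lemmas for `E3` and `cross3` -/

lemma inner3 (x y : E3) : ⟪x, y⟫ = x 0 * y 0 + x 1 * y 1 + x 2 * y 2 := by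
  simp [PiLp.inner_apply, Fin.sum_univ_three]; ring

lemma ext3 {x y : E3} (h0 : x 0 = y 0) (h1 : x 1 = y 1) (h2 : x 2 = y 2) : x = y := by
  ext i; fin_cases i <;> assumption

lemma cross3_a0 (x y : E3) : cross3 x y 0 = x 1 * y 2 - x 2 * y 1 := by simp [cross3]
lemma cross3_a1 (x y : E3) : cross3 x y 1 = x 2 * y 0 - x 0 * y 2 := by simp [cross3]
lemma cross3_a2 (x y : E3) : cross3 x y 2 = x 0 * y 1 - x 1 * y 0 := by simp [cross3]

lemma smul3 (r : ℝ) (x : E3) (i : Fin 3) : (r • x) i = r * x i := rfl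
lemma add3 (x y : E3) (i : Fin 3) : (x + y) i = x i + y i := rfl
lemma sub3 (x y : E3) (i : Fin 3) : (x - y) i = x i - y i := rfl
lemma zero3 (i : Fin 3) : (0 : E3) i = 0 := rfl

lemma inner_cross_self (x y : E3) : ⟪cross3 x y, x⟫ = 0 := by
  simp only [inner3, cross3_a0, cross3_a1, cross3_a2]; ring

lemma inner_cross_comm (x y z : E3) : ⟪cross3 x y, z⟫ = -⟪cross3 x z, y⟫ := by
  simp only [inner3, cross3_a0, cross3_a1, cross3_a2]; ring

lemma lagrange (x y z w : E3) :
    ⟪cross3 x y, cross3 z w⟫ = ⟪x, z⟫ * ⟪y, w⟫ - ⟪x, w⟫ * ⟪y, z⟫ := by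
  simp only [inner3, cross3_a0, cross3_a1, cross3_a2]; ring

lemma gram (v1 v2 x : E3) :
    (⟪v1, v1⟫ * ⟪v2, v2⟫ - ⟪v1, v2⟫ ^ 2) • x =
      (⟪x, v1⟫ * ⟪v2, v2⟫ - ⟪x, v2⟫ * ⟪v1, v2⟫) • v1 +
      (⟪x, v2⟫ * ⟪v1, v1⟫ - ⟪x, v1⟫ * ⟪v1, v2⟫) • v2 +
      ⟪x, cross3 v1 v2⟫ • cross3 v1 v2 := by
  apply ext3 <;>
    (simp only [inner3, cross3_a0, cross3_a1, cross3_a2, smul3, add3]; ring)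

lemma cross_smul_left (r : ℝ) (x y : E3) : cross3 (r • x) y = r • cross3 x y := by
  apply ext3 <;> (simp only [cross3_a0, cross3_a1, cross3_a2, smul3]; ring)

lemma cross_smul_right (r : ℝ) (x y : E3) : cross3 x (r • y) = r • cross3 x y := by
  apply ext3 <;> (simp only [cross3_a0, cross3_a1, cross3_a2, smul3]; ring)

lemma cross_add_right (x y z : E3) : cross3 x (y + z) = cross3 x y + cross3 x z := by
  apply ext3 <;> (simp only [cross3_a0, cross3_a1, cross3_a2, add3]; ring)

lemma cross3_self (x : E3) : cross3 x x = 0 := by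
  apply ext3 <;> (simp only [cross3_a0, cross3_a1, cross3_a2, zero3]; ring)

lemma cross3_zero_right (x : E3) : cross3 x 0 = 0 := by
  apply ext3 <;> (simp only [cross3_a0, cross3_a1, cross3_a2, zero3]; ring)

/-- `(x × y) × x = ⟪x,x⟫ y − ⟪x,y⟫ x`. -/
lemma cross_triple (x y : E3) :
    cross3 (cross3 x y) x = ⟪x, x⟫ • y - ⟪x, y⟫ • x := by
  apply ext3 <;>
    (simp only [inner3, cross3_a0, cross3_a1, cross3_a2, smul3, sub3]; ring)

/-- `x × (x × y) = ⟪x,y⟫ x − ⟪x,x⟫ y`. -/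
lemma cross_triple' (x y : E3) :
    cross3 x (cross3 x y) = ⟪x, y⟫ • x - ⟪x, x⟫ • y := by
  apply ext3 <;>
    (simp only [inner3, cross3_a0, cross3_a1, cross3_a2, smul3, sub3]; ring)

lemma cross3_norm_le (x y : E3) : ‖cross3 x y‖ ≤ ‖x‖ * ‖y‖ := by
  have h := lagrange x y x y
  rw [real_inner_self_eq_norm_sq, real_inner_self_eq_norm_sq, real_inner_self_eq_norm_sq,
    real_inner_comm y x] at h
  have h1 : ‖cross3 x y‖ ^ 2 ≤ (‖x‖ * ‖y‖) ^ 2 := by nlinarith [sq_nonneg ⟪x,y⟫]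
  exact (pow_le_pow_iff_left₀ (norm_nonneg _)
    (mul_nonneg (norm_nonneg x) (norm_nonneg y)) two_ne_zero).mp h1

/-! ### Calculus lemmas -/

lemma isBoundedBilinearMap_cross3 :
    IsBoundedBilinearMap ℝ (fun q : E3 × E3 => cross3 q.1 q.2) where
  add_left x₁ x₂ y := by
    apply ext3 <;> (simp only [cross3_a0, cross3_a1, cross3_a2, PiLp.add_apply]; ring)
  smul_left r x y := by
    apply ext3 <;>
      (simp only [cross3_a0, cross3_a1, cross3_a2, PiLp.smul_apply, smul_eq_mul]; ring)
  add_right x y₁ y₂ := by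
    apply ext3 <;> (simp only [cross3_a0, cross3_a1, cross3_a2, PiLp.add_apply]; ring)
  smul_right r x y := by
    apply ext3 <;>
      (simp only [cross3_a0, cross3_a1, cross3_a2, PiLp.smul_apply, smul_eq_mul]; ring)
  bound := ⟨1, one_pos, fun x y => by simpa using cross3_norm_le x y⟩

section calcSec
variable {E : Type*} [NormedAddCommGroup E] [NormedSpace ℝ E]

lemma contDiff_pdS {f : ℝ × ℝ → E} (hf : ContDiff ℝ (⊤ : ℕ∞) f) : ContDiff ℝ (⊤ : ℕ∞) (pdS f) :=
  (hf.fderiv_right (by simp)).clm_apply contDiff_const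

lemma contDiff_pdT {f : ℝ × ℝ → E} (hf : ContDiff ℝ (⊤ : ℕ∞) f) : ContDiff ℝ (⊤ : ℕ∞) (pdT f) :=
  (hf.fderiv_right (by simp)).clm_apply contDiff_const

end calcSec

lemma pdS_inner {f g : ℝ × ℝ → E3} (hf : ContDiff ℝ (⊤ : ℕ∞) f) (hg : ContDiff ℝ (⊤ : ℕ∞) g) (p : ℝ × ℝ) :
    pdS (fun q => ⟪f q, g q⟫) p = ⟪pdS f p, g p⟫ + ⟪f p, pdS g p⟫ := by
  unfold pdS
  rw [fderiv_inner_apply ℝ (hf.differentiable (by simp) p) (hg.differentiable (by simp) p)]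
  rw [add_comm]

lemma pdS_const (c : ℝ) (p : ℝ × ℝ) : pdS (fun _ : ℝ × ℝ => c) p = 0 := by
  unfold pdS; rw [fderiv_fun_const]; rfl

lemma pdS_mul {F G : ℝ × ℝ → ℝ} {p : ℝ × ℝ}
    (hF : DifferentiableAt ℝ F p) (hG : DifferentiableAt ℝ G p) :
    pdS (fun q => F q * G q) p = pdS F p * G p + F p * pdS G p := by
  unfold pdS
  rw [fderiv_fun_mul hF hG]
  simp [mul_comm]
  ring

lemma contDiff_cross {f g : ℝ × ℝ → E3} (hf : ContDiff ℝ (⊤ : ℕ∞) f) (hg : ContDiff ℝ (⊤ : ℕ∞) g) :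
    ContDiff ℝ (⊤ : ℕ∞) (fun q => cross3 (f q) (g q)) :=
  isBoundedBilinearMap_cross3.contDiff.comp (hf.prodMk hg)

lemma pdS_cross {f g : ℝ × ℝ → E3} (hf : ContDiff ℝ (⊤ : ℕ∞) f) (hg : ContDiff ℝ (⊤ : ℕ∞) g) (p : ℝ × ℝ) :
    pdS (fun q => cross3 (f q) (g q)) p = cross3 (pdS f p) (g p) + cross3 (f p) (pdS g p) := by
  have h1 : HasFDerivAt (fun q : E3 × E3 => cross3 q.1 q.2)
      (isBoundedBilinearMap_cross3.deriv (f p, g p)) (f p, g p) :=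
    isBoundedBilinearMap_cross3.hasFDerivAt _
  have h2 : HasFDerivAt (fun q => (f q, g q))
      ((fderiv ℝ f p).prod (fderiv ℝ g p)) p :=
    ((hf.differentiable (by simp) p).hasFDerivAt).prodMk ((hg.differentiable (by simp) p).hasFDerivAt)
  have h3 : HasFDerivAt (fun q => cross3 (f q) (g q))
      ((isBoundedBilinearMap_cross3.deriv (f p, g p)).comp
        ((fderiv ℝ f p).prod (fderiv ℝ g p))) p := by
    have := h1.comp p h2; exact this
  unfold pdS
  rw [h3.fderiv]
  simp [IsBoundedBilinearMap.deriv_apply, add_comm]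

/-! ### The main theorem -/

/-- For a smooth regular evolution of space curves `γ` with `‖∂sγ‖ = 1` everywhere,
the Lund-Regge equation `∂s∂tγ = ∂sγ × ∂tγ` holds if and only if the Frenet coefficients
satisfy `∂sa − bκ = 0`, `∂sb + aκ − cτ = −c` and `∂sc + bτ = b` everywhere. -/
theorem lund_regge_iff_frenet_coefficients (γ : ℝ × ℝ → E3)
    (hγ : ContDiff ℝ (⊤ : ℕ∞) γ) (hreg : RegularEvolution γ)
    (hunit : ∀ p : ℝ × ℝ, ‖pdS γ p‖ = 1) :
    (∀ p : ℝ × ℝ, pdS (pdT γ) p = cross3 (pdS γ p) (pdT γ p)) ↔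
      (∀ p : ℝ × ℝ,
        pdS (ca γ) p - cb γ p * curv γ p = 0 ∧
        pdS (cb γ) p + ca γ p * curv γ p - cc γ p * tors γ p = -cc γ p ∧
        pdS (cc γ) p + cb γ p * tors γ p = cb γ p) := by
  -- notation
  set v1 : ℝ × ℝ → E3 := pdS γ with hv1def
  set v2 : ℝ × ℝ → E3 := pdS v1 with hv2def
  set v3 : ℝ × ℝ → E3 := pdS v2 with hv3def
  set w : ℝ × ℝ → E3 := pdT γ with hwdef
  set w1 : ℝ × ℝ → E3 := pdS w with hw1def
  have hv1 : ContDiff ℝ (⊤ : ℕ∞) v1 := contDiff_pdS hγ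
  have hv2 : ContDiff ℝ (⊤ : ℕ∞) v2 := contDiff_pdS hv1
  have hv3 : ContDiff ℝ (⊤ : ℕ∞) v3 := contDiff_pdS hv2
  have hw : ContDiff ℝ (⊤ : ℕ∞) w := contDiff_pdT hγ
  have hw1 : ContDiff ℝ (⊤ : ℕ∞) w1 := contDiff_pdS hw
  have h11 : ∀ p, ⟪v1 p, v1 p⟫ = 1 := by
    intro p
    rw [real_inner_self_eq_norm_sq, hunit p]; norm_num
  have h12 : ∀ p, ⟪v1 p, v2 p⟫ = 0 := by
    intro p
    have hc : (fun q => ⟪v1 q, v1 q⟫) = fun _ : ℝ × ℝ => (1 : ℝ) := funext fun q => h11 q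
    have h1 := pdS_inner hv1 hv1 p
    rw [hc, pdS_const] at h1
    have h1' : (0:ℝ) = ⟪v2 p, v1 p⟫ + ⟪v1 p, v2 p⟫ := h1
    rw [real_inner_comm (v2 p) (v1 p)] at h1'
    linarith
  have h13 : ∀ p, ⟪v1 p, v3 p⟫ = -⟪v2 p, v2 p⟫ := by
    intro p
    have hc : (fun q => ⟪v1 q, v2 q⟫) = fun _ : ℝ × ℝ => (0 : ℝ) := funext fun q => h12 q
    have h1 := pdS_inner hv1 hv2 p
    rw [hc, pdS_const] at h1
    have h1' : (0:ℝ) = ⟪v2 p, v2 p⟫ + ⟪v1 p, v3 p⟫ := h1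
    linarith
  have hv2ne : ∀ p, v2 p ≠ 0 := by
    intro p hzero
    exact (hreg p).2 (by rw [show pdS (pdS γ) p = v2 p from rfl, hzero, cross3_zero_right])
  have hkpos : ∀ p, (0:ℝ) < ‖v2 p‖ := fun p => norm_pos_iff.mpr (hv2ne p)
  -- u = v1 × v2 and its norm
  have hknorm : ∀ p, ‖cross3 (v1 p) (v2 p)‖ = ‖v2 p‖ := by
    intro p
    have h := lagrange (v1 p) (v2 p) (v1 p) (v2 p)
    rw [h11 p, h12 p] at h
    have h2 : ‖cross3 (v1 p) (v2 p)‖ ^ 2 = ‖v2 p‖ ^ 2 := by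
      rw [← real_inner_self_eq_norm_sq, ← real_inner_self_eq_norm_sq, h]; ring
    exact (pow_left_inj₀ (norm_nonneg _) (norm_nonneg _) two_ne_zero).mp h2
  -- Frenet frame in terms of derivatives
  have hTv : ∀ p, Tv γ p = v1 p := by
    intro p
    show ‖v1 p‖⁻¹ • v1 p = v1 p
    rw [hunit p]; norm_num
  have hBv : ∀ p, Bv γ p = ‖v2 p‖⁻¹ • cross3 (v1 p) (v2 p) := by
    intro p
    show ‖cross3 (v1 p) (v2 p)‖⁻¹ • cross3 (v1 p) (v2 p) = _
    rw [hknorm p]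
  have hNv : ∀ p, Nv γ p = ‖v2 p‖⁻¹ • v2 p := by
    intro p
    show cross3 (Bv γ p) (Tv γ p) = _
    rw [hBv p, hTv p, cross_smul_left, cross_triple, h11 p, h12 p]
    simp
  have hcurv : ∀ p, curv γ p = ‖v2 p‖ := by
    intro p
    show ‖cross3 (v1 p) (v2 p)‖ / ‖v1 p‖ ^ 3 = _
    rw [hknorm p, hunit p]; norm_num
  have htors : ∀ p, tors γ p = ⟪cross3 (v1 p) (v2 p), v3 p⟫ / ‖v2 p‖ ^ 2 := by
    intro p
    show ⟪cross3 (v1 p) (v2 p), v3 p⟫ / ‖cross3 (v1 p) (v2 p)‖ ^ 2 = _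
    rw [hknorm p]
  -- the square-root of the inner product
  set kf : ℝ × ℝ → ℝ := fun p => Real.sqrt ⟪v2 p, v2 p⟫ with hkfdef
  have hkf : ∀ p, kf p = ‖v2 p‖ := by
    intro p
    show Real.sqrt ⟪v2 p, v2 p⟫ = _
    rw [real_inner_self_eq_norm_sq]
    exact Real.sqrt_sq (norm_nonneg _)
  -- coefficient functions
  have hcaP : ∀ p, ca γ p = ⟪w p, v1 p⟫ := by
    intro p; show ⟪w p, Tv γ p⟫ = _; rw [hTv p]
  have hcbP : ∀ p, cb γ p = (kf p)⁻¹ * ⟪w p, v2 p⟫ := by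
    intro p; show ⟪w p, Nv γ p⟫ = _
    rw [hNv p, real_inner_smul_right, hkf p]
  have hccP : ∀ p, cc γ p = (kf p)⁻¹ * ⟪w p, cross3 (v1 p) (v2 p)⟫ := by
    intro p; show ⟪w p, Bv γ p⟫ = _
    rw [hBv p, real_inner_smul_right, hkf p]
  have hca : ca γ = fun p => ⟪w p, v1 p⟫ := funext hcaP
  have hcb : cb γ = fun p => (kf p)⁻¹ * ⟪w p, v2 p⟫ := funext hcbP
  have hcc : cc γ = fun p => (kf p)⁻¹ * ⟪w p, cross3 (v1 p) (v2 p)⟫ := funext hccP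
  -- derivative of ca
  have hDa : ∀ p, pdS (ca γ) p = ⟪w1 p, v1 p⟫ + ⟪w p, v2 p⟫ := by
    intro p
    rw [hca, pdS_inner hw hv1 p]
  -- derivative of kf⁻¹
  have hQpos : ∀ p, (0:ℝ) < ⟪v2 p, v2 p⟫ := by
    intro p
    rw [real_inner_self_eq_norm_sq]
    exact pow_pos (hkpos p) 2
  have hrfD : ∀ p, HasFDerivAt (fun q => (kf q)⁻¹)
      ((-(1 / (2 * ‖v2 p‖)) / ‖v2 p‖ ^ 2) • fderiv ℝ (fun q => ⟪v2 q, v2 q⟫) p) p := by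
    intro p
    have hq : DifferentiableAt ℝ (fun q => ⟪v2 q, v2 q⟫) p :=
      ((hv2.inner ℝ hv2).differentiable (by simp)) p
    have hsqrtQ : Real.sqrt ⟪v2 p, v2 p⟫ = ‖v2 p‖ := hkf p
    have hsq : HasDerivAt (fun y : ℝ => (Real.sqrt y)⁻¹)
        (-(1 / (2 * ‖v2 p‖)) / ‖v2 p‖ ^ 2) ⟪v2 p, v2 p⟫ := by
      have h1 := (Real.hasDerivAt_sqrt (hQpos p).ne').inv
        (by rw [hsqrtQ]; exact (hkpos p).ne')
      rw [hsqrtQ] at h1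
      exact h1
    have := hsq.comp_hasFDerivAt p hq.hasFDerivAt; exact this
  have hrfdiff : ∀ p, DifferentiableAt ℝ (fun q => (kf q)⁻¹) p :=
    fun p => (hrfD p).differentiableAt
  have hpdSrf : ∀ p, pdS (fun q => (kf q)⁻¹) p =
      (-(1 / (2 * ‖v2 p‖)) / ‖v2 p‖ ^ 2) * (2 * ⟪v2 p, v3 p⟫) := by
    intro p
    unfold pdS
    rw [(hrfD p).fderiv]
    have h2 : fderiv ℝ (fun q => ⟪v2 q, v2 q⟫) p (1, 0) = 2 * ⟪v2 p, v3 p⟫ := by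
      have h3 : (fderiv ℝ (fun q => ⟪v2 q, v2 q⟫) p) (1, 0) = ⟪v3 p, v2 p⟫ + ⟪v2 p, v3 p⟫ :=
        pdS_inner hv2 hv2 p
      rw [h3, real_inner_comm (v3 p) (v2 p)]
      ring
    simp only [ContinuousLinearMap.coe_smul', Pi.smul_apply, smul_eq_mul]
    rw [h2]
  -- derivative of cb
  have hDb : ∀ p, pdS (cb γ) p =
      (-(1 / (2 * ‖v2 p‖)) / ‖v2 p‖ ^ 2) * (2 * ⟪v2 p, v3 p⟫) * ⟪w p, v2 p⟫ +
        ‖v2 p‖⁻¹ * (⟪w1 p, v2 p⟫ + ⟪w p, v3 p⟫) := by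
    intro p
    rw [hcb]
    rw [pdS_mul (hrfdiff p) (((hw.inner ℝ hv2).differentiable (by simp)) p)]
    rw [hpdSrf p, pdS_inner hw hv2 p, hkf p]
  -- derivative of cc
  have hucd : ContDiff ℝ (⊤ : ℕ∞) (fun q => cross3 (v1 q) (v2 q)) := contDiff_cross hv1 hv2
  have hDc : ∀ p, pdS (cc γ) p =
      (-(1 / (2 * ‖v2 p‖)) / ‖v2 p‖ ^ 2) * (2 * ⟪v2 p, v3 p⟫) * ⟪w p, cross3 (v1 p) (v2 p)⟫ +
        ‖v2 p‖⁻¹ * (⟪w1 p, cross3 (v1 p) (v2 p)⟫ + ⟪w p, cross3 (v1 p) (v3 p)⟫) := by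
    intro p
    rw [hcc]
    rw [pdS_mul (hrfdiff p) (((hw.inner ℝ hucd).differentiable (by simp)) p)]
    rw [hpdSrf p, pdS_inner hw hucd p, hkf p, pdS_cross hv1 hv2 p]
    have : cross3 (pdS v1 p) (v2 p) = 0 := by
      show cross3 (v2 p) (v2 p) = 0
      exact cross3_self _
    rw [this, zero_add]
  -- triple products against Y = v1 × w
  have hY1 : ∀ p, ⟪cross3 (v1 p) (w p), v1 p⟫ = 0 := fun p => inner_cross_self _ _
  have hY2 : ∀ p, ⟪cross3 (v1 p) (w p), v2 p⟫ = -⟪w p, cross3 (v1 p) (v2 p)⟫ := by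
    intro p; rw [inner_cross_comm, real_inner_comm]
  have hY3 : ∀ p, ⟪cross3 (v1 p) (w p), cross3 (v1 p) (v2 p)⟫ = ⟪w p, v2 p⟫ := by
    intro p; rw [lagrange, h11 p, h12 p]; ring
  -- orthogonal decomposition along the frame
  have hgramP : ∀ p, ∀ x : E3, ⟪v2 p, v2 p⟫ • x =
      (⟪x, v1 p⟫ * ⟪v2 p, v2 p⟫) • v1 p + ⟪x, v2 p⟫ • v2 p +
        ⟪x, cross3 (v1 p) (v2 p)⟫ • cross3 (v1 p) (v2 p) := by
    intro p x
    have h := gram (v1 p) (v2 p) x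
    rw [h11 p, h12 p] at h
    simpa using h
  have hS1 : ∀ p, ⟪v2 p, v2 p⟫ * ⟪w p, v3 p⟫ =
      -(⟪w p, v1 p⟫ * ⟪v2 p, v2 p⟫ * ⟪v2 p, v2 p⟫) + ⟪w p, v2 p⟫ * ⟪v2 p, v3 p⟫ +
        ⟪w p, cross3 (v1 p) (v2 p)⟫ * ⟪cross3 (v1 p) (v2 p), v3 p⟫ := by
    intro p
    have h := congrArg (fun z : E3 => ⟪z, v3 p⟫) (hgramP p (w p))
    simp only [inner_add_left, real_inner_smul_left] at h
    rw [h13 p] at h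
    linear_combination h
  have hS2 : ∀ p, ⟪v2 p, v2 p⟫ * ⟪w p, cross3 (v1 p) (v3 p)⟫ =
      ⟪v2 p, v3 p⟫ * ⟪w p, cross3 (v1 p) (v2 p)⟫ -
        ⟪cross3 (v1 p) (v2 p), v3 p⟫ * ⟪w p, v2 p⟫ := by
    intro p
    have h := congrArg (fun z : E3 => ⟪w p, cross3 (v1 p) z⟫) (hgramP p (v3 p))
    simp only [cross_smul_right, cross_add_right, cross3_self, cross_triple', h11 p, h12 p,
      real_inner_smul_right, inner_add_right, inner_sub_right, cross3_zero_right,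
      inner_zero_right, zero_smul, one_smul, zero_sub, inner_neg_right, mul_zero,
      mul_neg, zero_add, add_zero, mul_one] at h
    linear_combination h - ⟪w p, cross3 (v1 p) (v2 p)⟫ * real_inner_comm (v3 p) (v2 p) +
      ⟪w p, v2 p⟫ * real_inner_comm (v3 p) (cross3 (v1 p) (v2 p))
  -- the pointwise equivalence
  refine forall_congr' fun p => ?_
  have hk : ‖v2 p‖ ≠ 0 := (hkpos p).ne'
  have hQ : ⟪v2 p, v2 p⟫ = ‖v2 p‖ ^ 2 := real_inner_self_eq_norm_sq _
  have hX1 : pdS (ca γ) p - cb γ p * curv γ p =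
      ⟪w1 p, v1 p⟫ - ⟪cross3 (v1 p) (w p), v1 p⟫ := by
    rw [hDa p, hcbP p, hcurv p, hkf p, hY1 p]
    field_simp
    ring
  have hX2 : pdS (cb γ) p + ca γ p * curv γ p - cc γ p * tors γ p + cc γ p =
      ‖v2 p‖⁻¹ * (⟪w1 p, v2 p⟫ - ⟪cross3 (v1 p) (w p), v2 p⟫) := by
    rw [hDb p, hcaP p, hcurv p, hccP p, htors p, hkf p, hY2 p]
    have hS1' := hS1 p
    rw [hQ] at hS1'
    set k := ‖v2 p‖ with hkdef
    set A1 := (⟪w p, v1 p⟫ : ℝ) with hA1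
    set A2 := (⟪w p, v2 p⟫ : ℝ) with hA2
    set A3 := (⟪w p, cross3 (v1 p) (v2 p)⟫ : ℝ) with hA3
    set B2 := (⟪w1 p, v2 p⟫ : ℝ) with hB2
    set q23 := (⟪v2 p, v3 p⟫ : ℝ) with hq23
    set t3 := (⟪cross3 (v1 p) (v2 p), v3 p⟫ : ℝ) with ht3
    set W3 := (⟪w p, v3 p⟫ : ℝ) with hW3
    field_simp
    linear_combination hS1'
  have hX3 : pdS (cc γ) p + cb γ p * tors γ p - cb γ p =
      ‖v2 p‖⁻¹ * (⟪w1 p, cross3 (v1 p) (v2 p)⟫ -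
        ⟪cross3 (v1 p) (w p), cross3 (v1 p) (v2 p)⟫) := by
    rw [hDc p, hcbP p, htors p, hkf p, hY3 p]
    have hS2' := hS2 p
    rw [hQ] at hS2'
    set k := ‖v2 p‖ with hkdef
    set A2 := (⟪w p, v2 p⟫ : ℝ) with hA2
    set A3 := (⟪w p, cross3 (v1 p) (v2 p)⟫ : ℝ) with hA3
    set B3 := (⟪w1 p, cross3 (v1 p) (v2 p)⟫ : ℝ) with hB3
    set q23 := (⟪v2 p, v3 p⟫ : ℝ) with hq23
    set t3 := (⟪cross3 (v1 p) (v2 p), v3 p⟫ : ℝ) with ht3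
    set C13 := (⟪w p, cross3 (v1 p) (v3 p)⟫ : ℝ) with hC13
    field_simp
    linear_combination hS2'
  constructor
  · intro h
    refine ⟨?_, ?_, ?_⟩
    · rw [hX1, h]; ring
    · have h2 := hX2
      rw [h, sub_self, mul_zero] at h2
      linarith
    · have h3 := hX3
      rw [h, sub_self, mul_zero] at h3
      linarith
  · rintro ⟨E1, E2, E3⟩
    have i1 : ⟪w1 p - cross3 (v1 p) (w p), v1 p⟫ = 0 := by
      rw [inner_sub_left]; rw [hX1] at E1; linarith
    have i2 : ⟪w1 p - cross3 (v1 p) (w p), v2 p⟫ = 0 := by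
      have h0 : ‖v2 p‖⁻¹ * (⟪w1 p, v2 p⟫ - ⟪cross3 (v1 p) (w p), v2 p⟫) = 0 := by
        rw [← hX2]; linarith
      rcases mul_eq_zero.mp h0 with h0' | h0'
      · exact absurd h0' (inv_ne_zero hk)
      · rw [inner_sub_left]; linarith
    have i3 : ⟪w1 p - cross3 (v1 p) (w p), cross3 (v1 p) (v2 p)⟫ = 0 := by
      have h0 : ‖v2 p‖⁻¹ * (⟪w1 p, cross3 (v1 p) (v2 p)⟫ -
          ⟪cross3 (v1 p) (w p), cross3 (v1 p) (v2 p)⟫) = 0 := by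
        rw [← hX3]; linarith
      rcases mul_eq_zero.mp h0 with h0' | h0'
      · exact absurd h0' (inv_ne_zero hk)
      · rw [inner_sub_left]; linarith
    have hg := hgramP p (w1 p - cross3 (v1 p) (w p))
    rw [i1, i2, i3] at hg
    simp only [zero_mul, zero_smul, add_zero] at hg
    have hzero : w1 p - cross3 (v1 p) (w p) = 0 := by
      rcases smul_eq_zero.mp hg with hg' | hg'
      · exact absurd hg' (hQpos p).ne'
      · exact hg'
    exact sub_eq_zero.mp hzero
end
end

section
/- Let κ, τ, ℓ, m₂₁, m₃₁ : ℝ² → ℝ be smooth with κ > 0 and ℓ > 0 everywhere, and define the 2×2 complex-matrix-valued maps 𝓛 = (ℓ/2)·[[iτ, −κ],[κ, −iτ]] and 𝓜 = (1/2)·[[iμ, −m₂₁ − i m₃₁],[m₂₁ − i m₃₁, −iμ]], where μ = ( (∂s m₃₁)/ℓ + m₂₁ τ )/κ. Then the zero-curvature equation ∂t𝓛 − ∂s𝓜 = 𝓛𝓜 − 𝓜𝓛 holds everywhere if and only if the two partial differential equations ∂t(ℓκ) = ∂s m₂₁ − ℓτ m₃₁ and ∂t(ℓτ) = ℓκ m₃₁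 + ∂s μ hold everywhere. -/
noncomputable section
open Complex Matrix

/-- Entrywise partial `s`-derivative of a matrix-valued map. -/
def mpdS (A : ℝ × ℝ → Matrix (Fin 2) (Fin 2) ℂ) (p : ℝ × ℝ) : Matrix (Fin 2) (Fin 2) ℂ :=
  Matrix.of fun i j => pdS (fun q => A q i j) p

/-- Entrywise partial `t`-derivative of a matrix-valued map. -/
def mpdT (A : ℝ × ℝ → Matrix (Fin 2) (Fin 2) ℂ) (p : ℝ × ℝ) : Matrix (Fin 2) (Fin 2) ℂ :=
  Matrix.of fun i j => pdT (fun q => A q i j) p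

lemma pd_cmul (c : ℂ) (f : ℝ × ℝ → ℝ) (hf : Differentiable ℝ f) (p v : ℝ × ℝ) :
    fderiv ℝ (fun q => c * ((f q : ℝ) : ℂ)) p v = c * ((fderiv ℝ f p v : ℝ) : ℂ) := by
  have h1 : HasFDerivAt (fun q => ((f q : ℝ) : ℂ)) (Complex.ofRealCLM.comp (fderiv ℝ f p)) p :=
    Complex.ofRealCLM.hasFDerivAt.comp p (hf p).hasFDerivAt
  rw [(h1.const_mul c).fderiv]; simp

lemma pd_cmul2 (c d : ℂ) (f g : ℝ × ℝ → ℝ) (hf : Differentiable ℝ f) (hg : Differentiable ℝ g)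
    (p v : ℝ × ℝ) :
    fderiv ℝ (fun q => c * ((f q : ℝ) : ℂ) + d * ((g q : ℝ) : ℂ)) p v
      = c * ((fderiv ℝ f p v : ℝ) : ℂ) + d * ((fderiv ℝ g p v : ℝ) : ℂ) := by
  have h1 : HasFDerivAt (fun q => ((f q : ℝ) : ℂ)) (Complex.ofRealCLM.comp (fderiv ℝ f p)) p :=
    Complex.ofRealCLM.hasFDerivAt.comp p (hf p).hasFDerivAt
  have h2 : HasFDerivAt (fun q => ((g q : ℝ) : ℂ)) (Complex.ofRealCLM.comp (fderiv ℝ g p)) p :=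
    Complex.ofRealCLM.hasFDerivAt.comp p (hg p).hasFDerivAt
  rw [HasFDerivAt.fderiv (f := fun q => c * ((f q : ℝ) : ℂ) + d * ((g q : ℝ) : ℂ))
    ((h1.const_mul c).add (h2.const_mul d))]; simp

/-- For smooth `κ, τ, ℓ, m₂₁, m₃₁ : ℝ² → ℝ` with `κ > 0` and `ℓ > 0`, and
`𝓛 = (ℓ/2)·[[iτ, −κ],[κ, −iτ]]`, `𝓜 = (1/2)·[[iμ, −m₂₁ − i m₃₁],[m₂₁ − i m₃₁, −iμ]]` with
`μ = ((∂s m₃₁)/ℓ + m₂₁ τ)/κ`, the zero-curvature equation `∂t𝓛 − ∂s𝓜 = 𝓛𝓜 − 𝓜𝓛` holds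
everywhere iff `∂t(ℓκ) = ∂s m₂₁ − ℓτ m₃₁` and `∂t(ℓτ) = ℓκ m₃₁ + ∂s μ` hold everywhere. -/
theorem zero_curvature_iff_curvature_torsion_pdes
    (κ τ ℓ m21 m31 : ℝ × ℝ → ℝ)
    (hκ : ContDiff ℝ (⊤ : ℕ∞) κ) (hτ : ContDiff ℝ (⊤ : ℕ∞) τ) (hℓ : ContDiff ℝ (⊤ : ℕ∞) ℓ)
    (hm21 : ContDiff ℝ (⊤ : ℕ∞) m21) (hm31 : ContDiff ℝ (⊤ : ℕ∞) m31)
    (hκpos : ∀ p, 0 < κ p) (hℓpos : ∀ p, 0 < ℓ p)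
    (μ : ℝ × ℝ → ℝ)
    (hμ : ∀ p, μ p = (pdS m31 p / ℓ p + m21 p * τ p) / κ p)
    (𝓛 𝓜 : ℝ × ℝ → Matrix (Fin 2) (Fin 2) ℂ)
    (h𝓛 : ∀ p, 𝓛 p = ((ℓ p : ℂ) / 2) •
      !![I * (τ p : ℂ), -(κ p : ℂ); (κ p : ℂ), -(I * (τ p : ℂ))])
    (h𝓜 : ∀ p, 𝓜 p = (1 / 2 : ℂ) •
      !![I * (μ p : ℂ), -(m21 p : ℂ) - I * (m31 p : ℂ);
         (m21 p : ℂ) - I * (m31 p : ℂ), -(I * (μ p : ℂ))]) :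
    (∀ p, mpdT 𝓛 p - mpdS 𝓜 p = 𝓛 p * 𝓜 p - 𝓜 p * 𝓛 p) ↔
      (∀ p, pdT (fun q => ℓ q * κ q) p = pdS m21 p - ℓ p * τ p * m31 p ∧
            pdT (fun q => ℓ q * τ q) p = ℓ p * κ p * m31 p + pdS μ p) := by

  have dℓ := hℓ.differentiable (by simp)
  have dκ := hκ.differentiable (by simp)
  have dτ := hτ.differentiable (by simp)
  have d21 := hm21.differentiable (by simp)
  have d31 := hm31.differentiable (by simp)
  have dℓκ : Differentiable ℝ (fun q => ℓ q * κ q) := dℓ.mul dκ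
  have dℓτ : Differentiable ℝ (fun q => ℓ q * τ q) := dℓ.mul dτ
  have hμfun : μ = fun p => (fderiv ℝ m31 p (1, 0) / ℓ p + m21 p * τ p) / κ p :=
    funext fun p => hμ p
  have dμ : Differentiable ℝ μ := by
    rw [hμfun]
    have c1 : ContDiff ℝ (⊤ : ℕ∞) (fun p : ℝ × ℝ => fderiv ℝ m31 p (1, 0)) :=
      (hm31.fderiv_right (by simp)).clm_apply contDiff_const
    have c2 : ContDiff ℝ (⊤ : ℕ∞) (fun p : ℝ × ℝ => fderiv ℝ m31 p (1, 0) / ℓ p) :=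
      c1.div hℓ fun p => (hℓpos p).ne'
    have c3 : ContDiff ℝ (⊤ : ℕ∞) (fun p : ℝ × ℝ => fderiv ℝ m31 p (1, 0) / ℓ p + m21 p * τ p) :=
      c2.add (hm21.mul hτ)
    exact (c3.div hκ fun p => (hκpos p).ne').differentiable (by simp)
  have hμid : ∀ p, μ p * κ p * ℓ p = pdS m31 p + m21 p * τ p * ℓ p := by
    intro p
    have hk := (hκpos p).ne'
    have hl := (hℓpos p).ne'
    rw [hμ p]
    field_simp
  have hLT : ∀ p, mpdT 𝓛 p =
      !![I / 2 * ((pdT (fun q => ℓ q * τ q) p : ℝ) : ℂ),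
         -(1 / 2 : ℂ) * ((pdT (fun q => ℓ q * κ q) p : ℝ) : ℂ);
         (1 / 2 : ℂ) * ((pdT (fun q => ℓ q * κ q) p : ℝ) : ℂ),
         -(I / 2 * ((pdT (fun q => ℓ q * τ q) p : ℝ) : ℂ))] := by
    intro p
    have E00 : pdT (fun q => 𝓛 q 0 0) p = I / 2 * ((pdT (fun q => ℓ q * τ q) p : ℝ) : ℂ) := by
      have e : (fun q => 𝓛 q 0 0) = fun q => (I / 2) * ((ℓ q * τ q : ℝ) : ℂ) := by
        funext q; rw [h𝓛 q]; simp; push_cast; ring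
      rw [e]; simp only [pdT]; rw [pd_cmul _ _ dℓτ p]
    have E01 : pdT (fun q => 𝓛 q 0 1) p
        = -(1 / 2 : ℂ) * ((pdT (fun q => ℓ q * κ q) p : ℝ) : ℂ) := by
      have e : (fun q => 𝓛 q 0 1) = fun q => (-(1 / 2) : ℂ) * ((ℓ q * κ q : ℝ) : ℂ) := by
        funext q; rw [h𝓛 q]; simp; push_cast; ring
      rw [e]; simp only [pdT]; rw [pd_cmul _ _ dℓκ p]
    have E10 : pdT (fun q => 𝓛 q 1 0) p
        = (1 / 2 : ℂ) * ((pdT (fun q => ℓ q * κ q) p : ℝ) : ℂ) := by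
      have e : (fun q => 𝓛 q 1 0) = fun q => ((1 / 2 : ℂ)) * ((ℓ q * κ q : ℝ) : ℂ) := by
        funext q; rw [h𝓛 q]; simp; push_cast; ring
      rw [e]; simp only [pdT]; rw [pd_cmul _ _ dℓκ p]
    have E11 : pdT (fun q => 𝓛 q 1 1) p
        = -(I / 2 * ((pdT (fun q => ℓ q * τ q) p : ℝ) : ℂ)) := by
      have e : (fun q => 𝓛 q 1 1) = fun q => (-(I / 2)) * ((ℓ q * τ q : ℝ) : ℂ) := by
        funext q; rw [h𝓛 q]; simp; push_cast; ring
      rw [e]; simp only [pdT]; rw [pd_cmul _ _ dℓτ p]; ring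
    ext i j
    fin_cases i <;> fin_cases j
    · simpa [mpdT] using E00
    · simpa [mpdT] using E01
    · simpa [mpdT] using E10
    · simpa [mpdT] using E11
  have hMS : ∀ p, mpdS 𝓜 p =
      !![I / 2 * ((pdS μ p : ℝ) : ℂ),
         -(1 / 2 : ℂ) * ((pdS m21 p : ℝ) : ℂ) + -(I / 2) * ((pdS m31 p : ℝ) : ℂ);
         (1 / 2 : ℂ) * ((pdS m21 p : ℝ) : ℂ) + -(I / 2) * ((pdS m31 p : ℝ) : ℂ),
         -(I / 2 * ((pdS μ p : ℝ) : ℂ))] := by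
    intro p
    have E00 : pdS (fun q => 𝓜 q 0 0) p = I / 2 * ((pdS μ p : ℝ) : ℂ) := by
      have e : (fun q => 𝓜 q 0 0) = fun q => (I / 2) * ((μ q : ℝ) : ℂ) := by
        funext q; rw [h𝓜 q]; simp; ring
      rw [e]; simp only [pdS]; rw [pd_cmul _ _ dμ p]
    have E01 : pdS (fun q => 𝓜 q 0 1) p
        = -(1 / 2 : ℂ) * ((pdS m21 p : ℝ) : ℂ) + -(I / 2) * ((pdS m31 p : ℝ) : ℂ) := by
      have e : (fun q => 𝓜 q 0 1)
          = fun q => (-(1 / 2) : ℂ) * ((m21 q : ℝ) : ℂ) + (-(I / 2)) * ((m31 q : ℝ) : ℂ) := by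
        funext q; rw [h𝓜 q]; simp; ring
      rw [e]; simp only [pdS]; rw [pd_cmul2 _ _ _ _ d21 d31 p]
    have E10 : pdS (fun q => 𝓜 q 1 0) p
        = (1 / 2 : ℂ) * ((pdS m21 p : ℝ) : ℂ) + -(I / 2) * ((pdS m31 p : ℝ) : ℂ) := by
      have e : (fun q => 𝓜 q 1 0)
          = fun q => ((1 / 2) : ℂ) * ((m21 q : ℝ) : ℂ) + (-(I / 2)) * ((m31 q : ℝ) : ℂ) := by
        funext q; rw [h𝓜 q]; simp; ring
      rw [e]; simp only [pdS]; rw [pd_cmul2 _ _ _ _ d21 d31 p]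
    have E11 : pdS (fun q => 𝓜 q 1 1) p = -(I / 2 * ((pdS μ p : ℝ) : ℂ)) := by
      have e : (fun q => 𝓜 q 1 1) = fun q => (-(I / 2)) * ((μ q : ℝ) : ℂ) := by
        funext q; rw [h𝓜 q]; simp; ring
      rw [e]; simp only [pdS]; rw [pd_cmul _ _ dμ p]; ring
    ext i j
    fin_cases i <;> fin_cases j
    · simpa [mpdS] using E00
    · simpa [mpdS] using E01
    · simpa [mpdS] using E10
    · simpa [mpdS] using E11
  have hComm : ∀ p, 𝓛 p * 𝓜 p - 𝓜 p * 𝓛 p =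
      !![I * (κ p : ℂ) * (ℓ p : ℂ) * (m31 p : ℂ) / 2,
         (-(I * (τ p : ℂ) * (ℓ p : ℂ) * (m21 p : ℂ)) + (τ p : ℂ) * (ℓ p : ℂ) * (m31 p : ℂ)
            + I * (μ p : ℂ) * (κ p : ℂ) * (ℓ p : ℂ)) / 2;
         (I * (μ p : ℂ) * (κ p : ℂ) * (ℓ p : ℂ) - I * (τ p : ℂ) * (ℓ p : ℂ) * (m21 p : ℂ)
            - (τ p : ℂ) * (ℓ p : ℂ) * (m31 p : ℂ)) / 2,
         -(I * (κ p : ℂ) * (ℓ p : ℂ) * (m31 p : ℂ) / 2)] := by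
    intro p
    rw [h𝓛 p, h𝓜 p]
    ext i j
    fin_cases i <;> fin_cases j <;> simp [Matrix.mul_apply, Fin.sum_univ_two]
    · ring
    · linear_combination (-(((τ p : ℂ)) * (ℓ p : ℂ) * (m31 p : ℂ)) / 2) * Complex.I_sq
    · linear_combination ((((τ p : ℂ)) * (ℓ p : ℂ) * (m31 p : ℂ)) / 2) * Complex.I_sq
    · ring
  constructor
  · intro H p
    have hp := H p
    rw [hLT p, hMS p, hComm p] at hp
    have e00 : I / 2 * ((pdT (fun q => ℓ q * τ q) p : ℝ) : ℂ)
          - I / 2 * ((pdS μ p : ℝ) : ℂ)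
        = I * (κ p : ℂ) * (ℓ p : ℂ) * (m31 p : ℂ) / 2 := by
      have h := congrFun (congrFun hp 0) 0
      simpa using h
    have e01 : -(1 / 2 : ℂ) * ((pdT (fun q => ℓ q * κ q) p : ℝ) : ℂ)
          - (-(1 / 2 : ℂ) * ((pdS m21 p : ℝ) : ℂ) + -(I / 2) * ((pdS m31 p : ℝ) : ℂ))
        = (-(I * (τ p : ℂ) * (ℓ p : ℂ) * (m21 p : ℂ)) + (τ p : ℂ) * (ℓ p : ℂ) * (m31 p : ℂ)
            + I * (μ p : ℂ) * (κ p : ℂ) * (ℓ p : ℂ)) / 2 := by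
      have h := congrFun (congrFun hp 0) 1
      simpa using h
    have cμ : ((μ p : ℝ) : ℂ) * (κ p : ℂ) * (ℓ p : ℂ)
        = ((pdS m31 p : ℝ) : ℂ) + (m21 p : ℂ) * (τ p : ℂ) * (ℓ p : ℂ) := by
      exact_mod_cast congrArg (fun x : ℝ => (x : ℂ)) (hμid p)
    constructor
    · have h : ((pdT (fun q => ℓ q * κ q) p : ℝ) : ℂ)
          = ((pdS m21 p : ℝ) : ℂ) - (ℓ p : ℂ) * (τ p : ℂ) * (m31 p : ℂ) := by
        linear_combination (-2 : ℂ) * e01 - I * cμ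
      exact_mod_cast h
    · have h : ((pdT (fun q => ℓ q * τ q) p : ℝ) : ℂ)
          = (ℓ p : ℂ) * (κ p : ℂ) * (m31 p : ℂ) + ((pdS μ p : ℝ) : ℂ) := by
        linear_combination (-2 : ℂ) * I * e00
          + (((pdT (fun q => ℓ q * τ q) p : ℝ) : ℂ) - ((pdS μ p : ℝ) : ℂ)
              - (κ p : ℂ) * (ℓ p : ℂ) * (m31 p : ℂ)) * Complex.I_sq
      exact_mod_cast h
  · intro H p
    obtain ⟨h1, h2⟩ := H p
    have c1 : ((pdT (fun q => ℓ q * κ q) p : ℝ) : ℂ)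
        = ((pdS m21 p : ℝ) : ℂ) - (ℓ p : ℂ) * (τ p : ℂ) * (m31 p : ℂ) := by
      exact_mod_cast congrArg (fun x : ℝ => (x : ℂ)) h1
    have c2 : ((pdT (fun q => ℓ q * τ q) p : ℝ) : ℂ)
        = (ℓ p : ℂ) * (κ p : ℂ) * (m31 p : ℂ) + ((pdS μ p : ℝ) : ℂ) := by
      exact_mod_cast congrArg (fun x : ℝ => (x : ℂ)) h2
    have cμ : ((μ p : ℝ) : ℂ) * (κ p : ℂ) * (ℓ p : ℂ)
        = ((pdS m31 p : ℝ) : ℂ) + (m21 p : ℂ) * (τ p : ℂ) * (ℓ p : ℂ) := by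
      exact_mod_cast congrArg (fun x : ℝ => (x : ℂ)) (hμid p)
    rw [hLT p, hMS p, hComm p]
    ext i j
    fin_cases i <;> fin_cases j <;> simp [Matrix.sub_apply]
    · linear_combination (I / 2) * c2
    · linear_combination (-(1 : ℂ) / 2) * c1 + (-(I / 2)) * cμ
    · linear_combination ((1 : ℂ) / 2) * c1 + (-(I / 2)) * cμ
    · linear_combination (-(I / 2)) * c2
end
end

section
/- Let q : ℝ² → ℂ be smooth and nowhere zero, set r = Re( (∂t∂s q)/q ), and define the 2×2 complex-matrix-valued maps L = (1/2)·[[i, q],[−conj(q), −i]] and M = (i/2)·[[−r, −∂t q],[−conj(∂t q), r]]. Then the zero-curvature equation ∂t L − ∂s M = L M − M L holds everywhere if and only if Im( (∂t∂s q)/q ) = 0 and ∂s Re( (∂t∂s q)/q ) = −(1/2) ∂t(|q|²) hold everywhere. -/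
noncomputable section
open Complex Matrix

namespace ZCaux

variable {f g : ℝ × ℝ → ℂ} {h : ℝ × ℝ → ℝ} {p : ℝ × ℝ} {v : ℝ × ℝ}

lemma pd_conj (hf : DifferentiableAt ℝ f p) :
    fderiv ℝ (fun x => (starRingEnd ℂ) (f x)) p v = (starRingEnd ℂ) (fderiv ℝ f p v) := by
  have h1 : HasFDerivAt (fun x => (starRingEnd ℂ) (f x))
      ((Complex.conjCLE : ℂ →L[ℝ] ℂ).comp (fderiv ℝ f p)) p :=
    (Complex.conjCLE : ℂ →L[ℝ] ℂ).hasFDerivAt.comp p hf.hasFDerivAt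
  rw [h1.fderiv]; rfl

lemma pd_re (hf : DifferentiableAt ℝ f p) :
    fderiv ℝ (fun x => (f x).re) p v = (fderiv ℝ f p v).re := by
  have h1 : HasFDerivAt (fun x => (f x).re)
      ((Complex.reCLM).comp (fderiv ℝ f p)) p :=
    Complex.reCLM.hasFDerivAt.comp p hf.hasFDerivAt
  rw [h1.fderiv]; rfl

lemma pd_ofReal (hf : DifferentiableAt ℝ h p) :
    fderiv ℝ (fun x => ((h x : ℝ) : ℂ)) p v = ((fderiv ℝ h p v : ℝ) : ℂ) := by
  have h1 : HasFDerivAt (fun x => ((h x : ℝ) : ℂ))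
      ((Complex.ofRealCLM).comp (fderiv ℝ h p)) p :=
    Complex.ofRealCLM.hasFDerivAt.comp p hf.hasFDerivAt
  rw [h1.fderiv]; rfl

lemma pd_cmul (c : ℂ) (hf : DifferentiableAt ℝ f p) :
    fderiv ℝ (fun x => c * f x) p v = c * fderiv ℝ f p v := by
  rw [fderiv_const_mul hf c]; rfl

lemma pd_mul (hf : DifferentiableAt ℝ f p) (hg : DifferentiableAt ℝ g p) :
    fderiv ℝ (fun x => f x * g x) p v = fderiv ℝ f p v * g p + f p * fderiv ℝ g p v := by
  rw [fderiv_fun_mul hf hg]; simp [mul_comm]; ring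

lemma contDiff_pd (w : ℝ × ℝ) (hf : ContDiff ℝ (⊤ : ℕ∞) f) :
    ContDiff ℝ (⊤ : ℕ∞) (fun p => fderiv ℝ f p w) :=
  (hf.fderiv_right ((by simp))).clm_apply contDiff_const

lemma pd_symm (hf : ContDiff ℝ (⊤ : ℕ∞) f) (p : ℝ × ℝ) : pdS (pdT f) p = pdT (pdS f) p := by
  have hd : ∀ y, HasFDerivAt f (fderiv ℝ f y) y := fun y =>
    (hf.differentiable (by simp)).differentiableAt.hasFDerivAt
  have hd2 : HasFDerivAt (fderiv ℝ f) (fderiv ℝ (fderiv ℝ f) p) p :=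
    (((hf.fderiv_right (m := (⊤ : ℕ∞)) (by simp)).differentiable (by simp)) p).hasFDerivAt
  have hsymm := second_derivative_symmetric hd hd2 (0,1) (1,0)
  have e1 : ∀ w v : ℝ × ℝ, fderiv ℝ (fun x => fderiv ℝ f x w) p v
      = fderiv ℝ (fderiv ℝ f) p v w := by
    intro w v
    have h2 : HasFDerivAt (fun x => fderiv ℝ f x w)
        ((ContinuousLinearMap.apply ℝ ℂ w).comp (fderiv ℝ (fderiv ℝ f) p)) p :=
      (ContinuousLinearMap.apply ℝ ℂ w).hasFDerivAt.comp p hd2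
    rw [h2.fderiv]; rfl
  show fderiv ℝ (fun x => fderiv ℝ f x (0,1)) p (1,0)
      = fderiv ℝ (fun x => fderiv ℝ f x (1,0)) p (0,1)
  rw [e1, e1]
  exact hsymm.symm

end ZCaux

open ZCaux in
/-- For a smooth nowhere-zero `q : ℝ² → ℂ`, with `r = Re((∂t∂s q)/q)`,
`L = (1/2)·[[i, q],[−conj q, −i]]` and `M = (i/2)·[[−r, −∂t q],[−conj(∂t q), r]]`, the
zero-curvature equation `∂t L − ∂s M = L M − M L` holds everywhere iff
`Im((∂t∂s q)/q) = 0` and `∂s Re((∂t∂s q)/q) = −(1/2)∂t(|q|²)` hold everywhere. -/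
theorem zero_curvature_iff_PLR (q : ℝ × ℝ → ℂ)
    (hq : ContDiff ℝ (⊤ : ℕ∞) q) (hq0 : ∀ p, q p ≠ 0)
    (r : ℝ × ℝ → ℝ) (hr : ∀ p, r p = (pdT (pdS q) p / q p).re)
    (L M : ℝ × ℝ → Matrix (Fin 2) (Fin 2) ℂ)
    (hL : ∀ p, L p = (1 / 2 : ℂ) • !![I, q p; -(starRingEnd ℂ) (q p), -I])
    (hM : ∀ p, M p = (I / 2) •
      !![-(r p : ℂ), -pdT q p; -(starRingEnd ℂ) (pdT q p), (r p : ℂ)]) :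
    (∀ p, mpdT L p - mpdS M p = L p * M p - M p * L p) ↔
      (∀ p, (pdT (pdS q) p / q p).im = 0 ∧
            pdS r p = -(1 / 2) * pdT (fun x => ‖q x‖ ^ 2) p) := by
  have hqS : ContDiff ℝ (⊤ : ℕ∞) (pdS q) := contDiff_pd (1,0) hq
  have hqT : ContDiff ℝ (⊤ : ℕ∞) (pdT q) := contDiff_pd (0,1) hq
  have hqTS : ContDiff ℝ (⊤ : ℕ∞) (pdT (pdS q)) := contDiff_pd (0,1) hqS
  have hrC : ContDiff ℝ (⊤ : ℕ∞) r := by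
    rw [funext hr]
    simp only [div_eq_mul_inv]
    exact Complex.reCLM.contDiff.comp (hqTS.mul (hq.inv hq0))
  apply forall_congr'
  intro p
  have dq : DifferentiableAt ℝ q p := (hq.differentiable (by simp)) p
  have dqT : DifferentiableAt ℝ (pdT q) p := (hqT.differentiable (by simp)) p
  have drr : DifferentiableAt ℝ r p := (hrC.differentiable (by simp)) p
  have dcq : DifferentiableAt ℝ (fun x => (starRingEnd ℂ) (q x)) p :=
    ((Complex.conjCLE : ℂ →L[ℝ] ℂ).differentiableAt).comp p dq
  have dcqT : DifferentiableAt ℝ (fun x => (starRingEnd ℂ) (pdT q x)) p :=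
    ((Complex.conjCLE : ℂ →L[ℝ] ℂ).differentiableAt).comp p dqT
  have drc : DifferentiableAt ℝ (fun x => ((r x : ℝ) : ℂ)) p :=
    (Complex.ofRealCLM.differentiableAt).comp p drr
  have hc' : pdS (pdT q) p = pdT (pdS q) p := pd_symm hq p
  -- derivative of the squared norm
  have hDre : pdT (fun x => ‖q x‖ ^ 2) p
      = (pdT q p * (starRingEnd ℂ) (q p) + q p * (starRingEnd ℂ) (pdT q p)).re := by
    have e : (fun x => ‖q x‖ ^ 2) = fun x => (q x * (starRingEnd ℂ) (q x)).re := by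
      funext x
      simp [Complex.mul_conj, Complex.normSq_eq_norm_sq,
        ← Complex.ofReal_pow]
    rw [e]
    show fderiv ℝ (fun x => (q x * (starRingEnd ℂ) (q x)).re) p (0,1) = _
    rw [pd_re (dq.fun_mul dcq), pd_mul dq dcq, pd_conj dq]
    rfl
  have hD : ((pdT (fun x => ‖q x‖ ^ 2) p : ℝ) : ℂ)
      = q p * (starRingEnd ℂ) (pdT q p) + (starRingEnd ℂ) (q p) * pdT q p := by
    rw [hDre]
    apply Complex.ext
    · simp [Complex.add_re, Complex.mul_re, Complex.conj_re, Complex.conj_im]; ring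
    · simp [Complex.add_im, Complex.mul_im, Complex.conj_re, Complex.conj_im]; ring
  -- the t-derivative of L
  have hL' : mpdT L p = !![0, (1/2 : ℂ) * pdT q p;
      (-(1/2) : ℂ) * (starRingEnd ℂ) (pdT q p), 0] := by
    ext i j
    fin_cases i <;> fin_cases j
    · show pdT (fun x => L x 0 0) p = 0
      have e : (fun x => L x 0 0) = fun _ => (1/2 : ℂ) * I := by funext x; simp [hL]
      rw [e]; simp [pdT]
    · show pdT (fun x => L x 0 1) p = (1/2 : ℂ) * pdT q p
      have e : (fun x => L x 0 1) = fun x => (1/2 : ℂ) * q x := by funext x; simp [hL]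
      rw [e]; exact pd_cmul _ dq
    · show pdT (fun x => L x 1 0) p = (-(1/2) : ℂ) * (starRingEnd ℂ) (pdT q p)
      have e : (fun x => L x 1 0) = fun x => (-(1/2) : ℂ) * (starRingEnd ℂ) (q x) := by
        funext x; simp [hL]; try ring
      rw [e]
      show fderiv ℝ (fun x => (-(1/2) : ℂ) * (starRingEnd ℂ) (q x)) p (0,1) = _
      rw [pd_cmul _ dcq, pd_conj dq]; rfl
    · show pdT (fun x => L x 1 1) p = 0
      have e : (fun x => L x 1 1) = fun _ => (1/2 : ℂ) * (-I) := by funext x; simp [hL]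
      rw [e]; simp [pdT]
  -- the s-derivative of M
  have hM' : mpdS M p = !![(-(I/2)) * ((pdS r p : ℝ) : ℂ), (-(I/2)) * pdT (pdS q) p;
      (-(I/2)) * (starRingEnd ℂ) (pdT (pdS q) p), (I/2) * ((pdS r p : ℝ) : ℂ)] := by
    ext i j
    fin_cases i <;> fin_cases j
    · show pdS (fun x => M x 0 0) p = (-(I/2)) * ((pdS r p : ℝ) : ℂ)
      have e : (fun x => M x 0 0) = fun x => (-(I/2)) * ((r x : ℝ) : ℂ) := by
        funext x; simp [hM]; try ring
      rw [e]
      show fderiv ℝ (fun x => (-(I/2)) * ((r x : ℝ) : ℂ)) p (1,0) = _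
      rw [pd_cmul _ drc, pd_ofReal drr]; rfl
    · show pdS (fun x => M x 0 1) p = (-(I/2)) * pdT (pdS q) p
      have e : (fun x => M x 0 1) = fun x => (-(I/2)) * pdT q x := by
        funext x; simp [hM]; try ring
      rw [e]
      show fderiv ℝ (fun x => (-(I/2)) * pdT q x) p (1,0) = _
      rw [pd_cmul _ dqT]
      rw [show fderiv ℝ (pdT q) p (1,0) = pdS (pdT q) p from rfl, hc']
    · show pdS (fun x => M x 1 0) p = (-(I/2)) * (starRingEnd ℂ) (pdT (pdS q) p)
      have e : (fun x => M x 1 0) = fun x => (-(I/2)) * (starRingEnd ℂ) (pdT q x) := by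
        funext x; simp [hM]; try ring
      rw [e]
      show fderiv ℝ (fun x => (-(I/2)) * (starRingEnd ℂ) (pdT q x)) p (1,0) = _
      rw [pd_cmul _ dcqT, pd_conj dqT]
      rw [show fderiv ℝ (pdT q) p (1,0) = pdS (pdT q) p from rfl, hc']
    · show pdS (fun x => M x 1 1) p = (I/2) * ((pdS r p : ℝ) : ℂ)
      have e : (fun x => M x 1 1) = fun x => (I/2) * ((r x : ℝ) : ℂ) := by
        funext x; simp [hM]
      rw [e]
      show fderiv ℝ (fun x => (I/2) * ((r x : ℝ) : ℂ)) p (1,0) = _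
      rw [pd_cmul _ drc, pd_ofReal drr]; rfl
  -- the commutator
  have hcomm : L p * M p - M p * L p =
      !![ -(I/4) * (q p * (starRingEnd ℂ) (pdT q p) + (starRingEnd ℂ) (q p) * pdT q p),
          (I/2) * (((r p : ℝ) : ℂ) * q p) + (1/2) * pdT q p;
          (I/2) * (((r p : ℝ) : ℂ) * (starRingEnd ℂ) (q p)) - (1/2) * (starRingEnd ℂ) (pdT q p),
          (I/4) * (q p * (starRingEnd ℂ) (pdT q p) + (starRingEnd ℂ) (q p) * pdT q p)] := by
    rw [hL p, hM p]
    ext i j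
    fin_cases i <;> fin_cases j <;>
      simp [Matrix.mul_apply, Fin.sum_univ_two] <;> ring_nf <;> simp [Complex.I_sq] <;> ring_nf
  rw [hL', hM', hcomm, ← Matrix.ext_iff]
  simp only [Fin.forall_fin_two, Matrix.sub_apply, Matrix.cons_val', Matrix.cons_val_zero,
    Matrix.cons_val_one, Matrix.head_cons, Matrix.head_fin_const, Matrix.empty_val',
    Matrix.cons_val_fin_one, Matrix.of_apply]
  have hI2 : (I/2 : ℂ) ≠ 0 := by simp [Complex.I_ne_zero]
  constructor
  · rintro ⟨⟨h1, h2⟩, h3, h4⟩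
    have hca : pdT (pdS q) p = ((r p : ℝ) : ℂ) * q p := by
      have h : (I/2) * pdT (pdS q) p = (I/2) * (((r p : ℝ) : ℂ) * q p) := by
        linear_combination h2
      exact mul_left_cancel₀ hI2 h
    constructor
    · rw [hca, mul_div_assoc, div_self (hq0 p), mul_one]
      simp
    · have h : (I/2) * ((pdS r p : ℝ) : ℂ)
          = (I/2) * (-(1/2) * ((pdT (fun x => ‖q x‖ ^ 2) p : ℝ) : ℂ)) := by
        rw [hD]; linear_combination -h4
      have h5 := mul_left_cancel₀ hI2 h
      have h6 : ((pdS r p : ℝ) : ℂ)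
          = (((-(1/2) * pdT (fun x => ‖q x‖ ^ 2) p : ℝ)) : ℂ) := by
        push_cast; exact h5
      exact Complex.ofReal_inj.mp h6
  · rintro ⟨h1, h2⟩
    have hca : pdT (pdS q) p = ((r p : ℝ) : ℂ) * q p := by
      have e1 : (pdT (pdS q) p / q p : ℂ) = (((pdT (pdS q) p / q p).re : ℝ) : ℂ) := by
        apply Complex.ext
        · simp
        · simpa using h1
      have e2 : pdT (pdS q) p = (pdT (pdS q) p / q p) * q p :=
        (div_mul_cancel₀ _ (hq0 p)).symm
      rw [hr p, ← e1, ← e2]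
    have hrsC : ((pdS r p : ℝ) : ℂ)
        = -(1/2) * ((pdT (fun x => ‖q x‖ ^ 2) p : ℝ) : ℂ) := by
      rw [h2]; push_cast; ring
    refine ⟨⟨?_, ?_⟩, ?_, ?_⟩
    · rw [hrsC, hD]; ring
    · rw [hca]; ring
    · rw [hca, _root_.map_mul, Complex.conj_ofReal]; ring
    · rw [hrsC, hD]; ring
end
end

section
/- Let q : ℝ² → ℂ be smooth and nowhere zero, set r = Re( (∂t∂s q)/q ), and for λ > 0 define L^λ = (1/2)·[[iλ, q],[−conj(q), −iλ]] and M^λ = (i/(2λ))·[[−r, −∂t q],[−conj(∂t q), r]]. Let F : ℝ² × (0,∞) → M₂(ℂ) be smooth with F(s,t,λ) invertible for all (s,t,λ), satisfying ∂s F = F·L^λ and ∂t F = F·M^λ for every λ > 0. Fix λ₀ > 0 and define γ : ℝ² → M₂(ℂ) by γ(s,t) = λ₀ · (∂λ F)(s,t,λ₀) · F(s,t,λ₀)⁻¹. Then: (i) γ satisfies the matrix Lund-Regge equation ∂t∂s γ = (∂s γ)(∂t γ) − (∂t γ)(∂s γ); and (ii) tr( (∂s γ)² ) = −λ₀²/2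 identically, i.e., under the identification of su(2) with ℝ³ via −2 tr of products, ‖∂s γ‖ = λ₀. -/
noncomputable section
open Complex Matrix

/-- Entrywise partial derivative, in an arbitrary direction `v`, of a matrix-valued map on
`ℝ × ℝ × ℝ` (coordinates `(s, t, λ)`). -/
def mpd3 (A : ℝ × ℝ × ℝ → Matrix (Fin 2) (Fin 2) ℂ) (v x : ℝ × ℝ × ℝ) :
    Matrix (Fin 2) (Fin 2) ℂ :=
  Matrix.of fun i j => fderiv ℝ (fun y => A y i j) x v

/-! ### Auxiliary material for the proof -/

section Aux
open ContinuousLinearMap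

/-- Entrywise directional derivative, over an arbitrary domain. -/
def md {D : Type*} [NormedAddCommGroup D] [NormedSpace ℝ D]
    (A : D → Matrix (Fin 2) (Fin 2) ℂ) (v x : D) : Matrix (Fin 2) (Fin 2) ℂ :=
  Matrix.of fun i j => fderiv ℝ (fun y => A y i j) x v

variable {D : Type*} [NormedAddCommGroup D] [NormedSpace ℝ D]

lemma md_const (C : Matrix (Fin 2) (Fin 2) ℂ) (v x : D) : md (fun _ => C) v x = 0 := by
  ext i j; simp [md]

omit [NormedAddCommGroup D] [NormedSpace ℝ D] in
lemma entry_mul_eq (A B : D → Matrix (Fin 2) (Fin 2) ℂ) (i j : Fin 2) :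
    (fun y => (A y * B y) i j) = fun y => A y i 0 * B y 0 j + A y i 1 * B y 1 j := by
  funext y
  simp [Matrix.mul_apply, Fin.sum_univ_two]

lemma diffAt_entry_mul {A B : D → Matrix (Fin 2) (Fin 2) ℂ} {x : D}
    (hA : ∀ i j, DifferentiableAt ℝ (fun y => A y i j) x)
    (hB : ∀ i j, DifferentiableAt ℝ (fun y => B y i j) x) (i j : Fin 2) :
    DifferentiableAt ℝ (fun y => (A y * B y) i j) x := by
  rw [entry_mul_eq]
  exact ((hA i 0).mul (hB 0 j)).add ((hA i 1).mul (hB 1 j))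

lemma md_mul {A B : D → Matrix (Fin 2) (Fin 2) ℂ} {x : D} (v : D)
    (hA : ∀ i j, DifferentiableAt ℝ (fun y => A y i j) x)
    (hB : ∀ i j, DifferentiableAt ℝ (fun y => B y i j) x) :
    md (fun y => A y * B y) v x = md A v x * B x + A x * md B v x := by
  ext i j
  show fderiv ℝ (fun y => (A y * B y) i j) x v = _
  rw [entry_mul_eq, fderiv_fun_add ((hA i 0).fun_mul (hB 0 j)) ((hA i 1).fun_mul (hB 1 j)),
    fderiv_fun_mul (hA i 0) (hB 0 j), fderiv_fun_mul (hA i 1) (hB 1 j)]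
  simp [md, Matrix.mul_apply, Fin.sum_univ_two, Matrix.add_apply, smul_eq_mul]
  ring

lemma md_smul {A : D → Matrix (Fin 2) (Fin 2) ℂ} {x : D} (c : ℂ) (v : D)
    (hA : ∀ i j, DifferentiableAt ℝ (fun y => A y i j) x) :
    md (fun y => c • A y) v x = c • md A v x := by
  ext i j
  show fderiv ℝ (fun y => c • A y i j) x v = c * fderiv ℝ (fun y => A y i j) x v
  have h : (fun y => c • A y i j) = fun y => c * A y i j := by funext y; simp [smul_eq_mul]
  rw [h, fderiv_const_mul (hA i j)]
  simp

/-! Linear changes of variables. -/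

def eLin : (ℝ × ℝ) →L[ℝ] ℝ × ℝ × ℝ :=
  (ContinuousLinearMap.fst ℝ ℝ ℝ).prod ((ContinuousLinearMap.snd ℝ ℝ ℝ).prod 0)

def piLin : (ℝ × ℝ × ℝ) →L[ℝ] ℝ × ℝ :=
  (ContinuousLinearMap.fst ℝ ℝ (ℝ × ℝ)).prod
    ((ContinuousLinearMap.fst ℝ ℝ ℝ).comp (ContinuousLinearMap.snd ℝ ℝ (ℝ × ℝ)))

def lamLin : (ℝ × ℝ × ℝ) →L[ℝ] ℝ :=
  (ContinuousLinearMap.snd ℝ ℝ ℝ).comp (ContinuousLinearMap.snd ℝ ℝ (ℝ × ℝ))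

lemma hasFDeriv_e (lam0 : ℝ) (p : ℝ × ℝ) :
    HasFDerivAt (fun z : ℝ × ℝ => ((z.1, z.2, lam0) : ℝ × ℝ × ℝ)) eLin p := by
  have h : (fun z : ℝ × ℝ => ((z.1, z.2, lam0) : ℝ × ℝ × ℝ))
      = fun z => eLin z + ((0 : ℝ), (0 : ℝ), lam0) := by
    funext z; simp [eLin, Prod.ext_iff]
  rw [h]; exact eLin.hasFDerivAt.add_const _

lemma diff_comp_e {E : Type*} [NormedAddCommGroup E] [NormedSpace ℝ E]
    {f : ℝ × ℝ × ℝ → E} {lam0 : ℝ} {p : ℝ × ℝ}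
    (hf : DifferentiableAt ℝ f (p.1, p.2, lam0)) :
    DifferentiableAt ℝ (fun z : ℝ × ℝ => f (z.1, z.2, lam0)) p :=
  hf.comp p (hasFDeriv_e lam0 p).differentiableAt

lemma chain_e {f : ℝ × ℝ × ℝ → ℂ} {lam0 : ℝ} {p : ℝ × ℝ}
    (hf : DifferentiableAt ℝ f (p.1, p.2, lam0)) (v : ℝ × ℝ) :
    fderiv ℝ (fun z : ℝ × ℝ => f (z.1, z.2, lam0)) p v
      = fderiv ℝ f (p.1, p.2, lam0) (v.1, v.2, 0) := by
  have h := (hf.hasFDerivAt.comp p (hasFDeriv_e lam0 p)).fderiv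
  rw [show (fun z : ℝ × ℝ => f (z.1, z.2, lam0))
      = f ∘ fun z : ℝ × ℝ => ((z.1, z.2, lam0) : ℝ × ℝ × ℝ) from rfl, h]
  simp [eLin]

lemma hasFDeriv_pi (x : ℝ × ℝ × ℝ) :
    HasFDerivAt (fun y : ℝ × ℝ × ℝ => ((y.1, y.2.1) : ℝ × ℝ)) piLin x := by
  have h : (fun y : ℝ × ℝ × ℝ => ((y.1, y.2.1) : ℝ × ℝ)) = fun y => piLin y := by
    funext y; simp [piLin]
  rw [h]; exact piLin.hasFDerivAt

lemma diff_comp_pi {E : Type*} [NormedAddCommGroup E] [NormedSpace ℝ E]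
    {g : ℝ × ℝ → E} {x : ℝ × ℝ × ℝ} (hg : DifferentiableAt ℝ g (x.1, x.2.1)) :
    DifferentiableAt ℝ (fun y : ℝ × ℝ × ℝ => g (y.1, y.2.1)) x :=
  hg.comp x (hasFDeriv_pi x).differentiableAt

lemma chain_pi {g : ℝ × ℝ → ℂ} {x : ℝ × ℝ × ℝ} (hg : DifferentiableAt ℝ g (x.1, x.2.1))
    (v : ℝ × ℝ × ℝ) :
    fderiv ℝ (fun y : ℝ × ℝ × ℝ => g (y.1, y.2.1)) x v
      = fderiv ℝ g (x.1, x.2.1) (v.1, v.2.1) := by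
  have h := (hg.hasFDerivAt.comp x (hasFDeriv_pi x)).fderiv
  rw [show (fun y : ℝ × ℝ × ℝ => g (y.1, y.2.1))
      = g ∘ fun y : ℝ × ℝ × ℝ => ((y.1, y.2.1) : ℝ × ℝ) from rfl, h]
  simp [piLin]

lemma chain_pi_lam {g : ℝ × ℝ → ℂ} {x : ℝ × ℝ × ℝ} (hg : DifferentiableAt ℝ g (x.1, x.2.1)) :
    fderiv ℝ (fun y : ℝ × ℝ × ℝ => g (y.1, y.2.1)) x ((0 : ℝ), (0 : ℝ), (1 : ℝ)) = 0 := by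
  rw [chain_pi hg]
  have h : (((0 : ℝ), (0 : ℝ), (1 : ℝ)).1, ((0 : ℝ), (0 : ℝ), (1 : ℝ)).2.1) = (0 : ℝ × ℝ) := rfl
  rw [h, map_zero]

lemma hasFDeriv_lamC (x : ℝ × ℝ × ℝ) :
    HasFDerivAt (fun y : ℝ × ℝ × ℝ => ((y.2.2 : ℝ) : ℂ)) (ofRealCLM.comp lamLin) x :=
  ofRealCLM.hasFDerivAt.comp x lamLin.hasFDerivAt

/-! Smoothness facts about `q` and `r`. -/

lemma contDiff_pd_s11 {q : ℝ × ℝ → ℂ} (hq : ContDiff ℝ (⊤ : ℕ∞) q) (v : ℝ × ℝ) :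
    ContDiff ℝ (⊤ : ℕ∞) (fun p => fderiv ℝ q p v) :=
  (ContinuousLinearMap.apply ℝ ℂ v).contDiff.comp (hq.fderiv_right (by simp))

lemma diff_conj {g : ℝ × ℝ → ℂ} (hg : Differentiable ℝ g) :
    Differentiable ℝ (fun p => (starRingEnd ℂ) (g p)) :=
  fun p => Complex.conjCLE.differentiableAt.comp p (hg p)

lemma diff_rC {q : ℝ × ℝ → ℂ} (hq : ContDiff ℝ (⊤ : ℕ∞) q) (hq0 : ∀ p, q p ≠ 0)
    {r : ℝ × ℝ → ℝ} (hr : ∀ p, r p = (pdT (pdS q) p / q p).re) :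
    Differentiable ℝ (fun p => (r p : ℂ)) := by
  intro p
  have h1 : DifferentiableAt ℝ (fun p => pdT (pdS q) p) p := by
    have := contDiff_pd_s11 (contDiff_pd_s11 hq ((1 : ℝ), (0 : ℝ))) ((0 : ℝ), (1 : ℝ))
    exact this.differentiable (by simp) p
  have h2 : DifferentiableAt ℝ (fun p => pdT (pdS q) p / q p) p := by
    simpa [div_eq_mul_inv] using h1.fun_mul (((hq.differentiable (by simp) p).inv (hq0 p) :
      DifferentiableAt ℝ (fun p => (q p)⁻¹) p))
  have h3 : DifferentiableAt ℝ r p := by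
    have h : r = fun p => (pdT (pdS q) p / q p).re := funext hr
    rw [h]
    exact Complex.reCLM.differentiableAt.comp p h2
  exact Complex.ofRealCLM.differentiableAt.comp p h3

lemma diff_pdTq {q : ℝ × ℝ → ℂ} (hq : ContDiff ℝ (⊤ : ℕ∞) q) : Differentiable ℝ (pdT q) := by
  have h := (contDiff_pd_s11 hq ((0 : ℝ), (1 : ℝ))).differentiable (by simp)
  exact h

/-! The matrices of the Lax pair. -/

def Lmat (q : ℝ × ℝ → ℂ) (x : ℝ × ℝ × ℝ) : Matrix (Fin 2) (Fin 2) ℂ :=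
  (1 / 2 : ℂ) • !![I * (x.2.2 : ℂ), q (x.1, x.2.1);
      -(starRingEnd ℂ) (q (x.1, x.2.1)), -(I * (x.2.2 : ℂ))]

def Mmat (q : ℝ × ℝ → ℂ) (r : ℝ × ℝ → ℝ) (x : ℝ × ℝ × ℝ) : Matrix (Fin 2) (Fin 2) ℂ :=
  (I / (2 * (x.2.2 : ℂ))) • !![-(r (x.1, x.2.1) : ℂ), -pdT q (x.1, x.2.1);
      -(starRingEnd ℂ) (pdT q (x.1, x.2.1)), (r (x.1, x.2.1) : ℂ)]

def A0 : Matrix (Fin 2) (Fin 2) ℂ := (1 / 2 : ℂ) • !![I, 0; 0, -I]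

lemma A0_sq : A0 * A0 = (-(1 / 4) : ℂ) • 1 := by
  ext i j
  fin_cases i <;> fin_cases j <;>
    simp [A0, Matrix.mul_apply, Fin.sum_univ_two, Matrix.one_apply] <;> ring_nf <;>
    simp [Complex.I_sq] <;> ring

lemma diff_entry_L {q : ℝ × ℝ → ℂ} (hq : ContDiff ℝ (⊤ : ℕ∞) q) (x : ℝ × ℝ × ℝ) (i j : Fin 2) :
    DifferentiableAt ℝ (fun y => Lmat q y i j) x := by
  have hq' : Differentiable ℝ q := hq.differentiable (by simp)
  fin_cases i <;> fin_cases j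
  · show DifferentiableAt ℝ (fun y => Lmat q y 0 0) x
    have h : (fun y => Lmat q y 0 0) = fun y : ℝ×ℝ×ℝ => (1/2 : ℂ) * (I * ((y.2.2:ℝ):ℂ)) := by
      funext y; simp [Lmat]
    rw [h]
    exact (((hasFDeriv_lamC x).const_mul I).const_mul (1/2 : ℂ)).differentiableAt
  · show DifferentiableAt ℝ (fun y => Lmat q y 0 1) x
    have h : (fun y => Lmat q y 0 1) = fun y : ℝ×ℝ×ℝ => (1/2 : ℂ) * q (y.1, y.2.1) := by
      funext y; simp [Lmat]
    rw [h]
    exact (diff_comp_pi (hq' _)).const_mul _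
  · show DifferentiableAt ℝ (fun y => Lmat q y 1 0) x
    have h : (fun y => Lmat q y 1 0)
        = fun y : ℝ×ℝ×ℝ => (1/2 : ℂ) * ((fun p => -(starRingEnd ℂ) (q p)) (y.1, y.2.1)) := by
      funext y; simp [Lmat]
    rw [h]
    exact (diff_comp_pi ((diff_conj hq').neg _)).const_mul _
  · show DifferentiableAt ℝ (fun y => Lmat q y 1 1) x
    have h : (fun y => Lmat q y 1 1) = fun y : ℝ×ℝ×ℝ => (1/2 : ℂ) * (-(I * ((y.2.2:ℝ):ℂ))) := by
      funext y; simp [Lmat]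
    rw [h]
    exact ((((hasFDeriv_lamC x).const_mul I).neg).const_mul (1/2 : ℂ)).differentiableAt

lemma md_L_lam {q : ℝ × ℝ → ℂ} (hq : ContDiff ℝ (⊤ : ℕ∞) q) (x : ℝ × ℝ × ℝ) :
    md (Lmat q) ((0 : ℝ), (0 : ℝ), (1 : ℝ)) x = A0 := by
  have hq' : Differentiable ℝ q := hq.differentiable (by simp)
  ext i j
  show fderiv ℝ (fun y => Lmat q y i j) x _ = A0 i j
  fin_cases i <;> fin_cases j
  · show fderiv ℝ (fun y => Lmat q y 0 0) x ((0:ℝ),(0:ℝ),(1:ℝ)) = A0 0 0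
    have h : (fun y => Lmat q y 0 0) = fun y : ℝ×ℝ×ℝ => (1/2 : ℂ) * (I * ((y.2.2:ℝ):ℂ)) := by
      funext y; simp [Lmat]
    rw [h, (((hasFDeriv_lamC x).const_mul I).const_mul (1/2 : ℂ)).fderiv]
    simp [A0, lamLin]
  · show fderiv ℝ (fun y => Lmat q y 0 1) x ((0:ℝ),(0:ℝ),(1:ℝ)) = A0 0 1
    have h : (fun y => Lmat q y 0 1) = fun y : ℝ×ℝ×ℝ => (1/2 : ℂ) * q (y.1, y.2.1) := by
      funext y; simp [Lmat]
    rw [h, fderiv_const_mul (diff_comp_pi (hq' _))]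
    simp only [ContinuousLinearMap.coe_smul', Pi.smul_apply]
    rw [chain_pi_lam (hq' _)]
    simp [A0]
  · show fderiv ℝ (fun y => Lmat q y 1 0) x ((0:ℝ),(0:ℝ),(1:ℝ)) = A0 1 0
    have h : (fun y => Lmat q y 1 0)
        = fun y : ℝ×ℝ×ℝ => (1/2 : ℂ) * ((fun p => -(starRingEnd ℂ) (q p)) (y.1, y.2.1)) := by
      funext y; simp [Lmat]
    rw [h, fderiv_const_mul (diff_comp_pi (g := fun p => -(starRingEnd ℂ) (q p)) (((diff_conj hq').neg) _))]
    simp only [ContinuousLinearMap.coe_smul', Pi.smul_apply]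
    rw [chain_pi_lam (g := fun p => -(starRingEnd ℂ) (q p)) (((diff_conj hq').neg) _)]
    simp [A0]
  · show fderiv ℝ (fun y => Lmat q y 1 1) x ((0:ℝ),(0:ℝ),(1:ℝ)) = A0 1 1
    have h : (fun y => Lmat q y 1 1) = fun y : ℝ×ℝ×ℝ => (1/2 : ℂ) * (-(I * ((y.2.2:ℝ):ℂ))) := by
      funext y; simp [Lmat]
    rw [h, ((((hasFDeriv_lamC x).const_mul I).fun_neg).const_mul (1/2 : ℂ)).fderiv]
    simp [A0, lamLin]

lemma M_entry_hasFDeriv {g : ℝ × ℝ → ℂ} (hg : Differentiable ℝ g) {x : ℝ × ℝ × ℝ}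
    (hx : 0 < x.2.2) :
    DifferentiableAt ℝ (fun y : ℝ × ℝ × ℝ => (I / (2 * ((y.2.2:ℝ) : ℂ))) * g (y.1, y.2.1)) x ∧
    fderiv ℝ (fun y : ℝ × ℝ × ℝ => (I / (2 * ((y.2.2:ℝ) : ℂ))) * g (y.1, y.2.1)) x
        ((0:ℝ),(0:ℝ),(1:ℝ))
      = (-(x.2.2 : ℂ)⁻¹) * ((I / (2 * (x.2.2 : ℂ))) * g (x.1, x.2.1)) := by
  have hne : (2 * ((x.2.2:ℝ) : ℂ)) ≠ 0 := by
    simp [Complex.ofReal_ne_zero, ne_of_gt hx]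
  have hx0 : ((x.2.2:ℝ) : ℂ) ≠ 0 := by
    simp [Complex.ofReal_ne_zero, ne_of_gt hx]
  have hden : HasFDerivAt (fun y : ℝ × ℝ × ℝ => 2 * ((y.2.2:ℝ) : ℂ))
      ((2:ℂ) • (ofRealCLM.comp lamLin)) x := (hasFDeriv_lamC x).const_mul 2
  have hinv : HasFDerivAt (fun y : ℝ × ℝ × ℝ => (2 * ((y.2.2:ℝ) : ℂ))⁻¹)
      ((-(ContinuousLinearMap.mulLeftRight ℝ ℂ (2 * ((x.2.2:ℝ):ℂ))⁻¹
          (2 * ((x.2.2:ℝ):ℂ))⁻¹)).comp ((2:ℂ) • (ofRealCLM.comp lamLin))) x :=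
    (hasFDerivAt_inv' hne).comp x hden
  have hconst := hinv.const_mul I
  have hg' : HasFDerivAt (fun y : ℝ × ℝ × ℝ => g (y.1, y.2.1))
      (fderiv ℝ (fun y : ℝ × ℝ × ℝ => g (y.1, y.2.1)) x) x :=
    (diff_comp_pi (hg _)).hasFDerivAt
  have hmul := hconst.fun_mul hg'
  have h0 : (fun y : ℝ × ℝ × ℝ => (I / (2 * ((y.2.2:ℝ) : ℂ))) * g (y.1, y.2.1))
      = fun y : ℝ × ℝ × ℝ => (I * (2 * ((y.2.2:ℝ) : ℂ))⁻¹) * g (y.1, y.2.1) := by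
    funext y; rw [div_eq_mul_inv]
  rw [h0]
  refine ⟨hmul.differentiableAt, ?_⟩
  rw [hmul.fderiv]
  simp only [ContinuousLinearMap.add_apply, ContinuousLinearMap.coe_smul', Pi.smul_apply,
    ContinuousLinearMap.coe_comp', Function.comp_apply, ContinuousLinearMap.neg_apply,
    ContinuousLinearMap.mulLeftRight_apply, smul_eq_mul]
  rw [chain_pi_lam (hg _)]
  simp [lamLin]
  field_simp

lemma diff_entry_M {q : ℝ × ℝ → ℂ} (hq : ContDiff ℝ (⊤ : ℕ∞) q) (hq0 : ∀ p, q p ≠ 0)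
    {r : ℝ × ℝ → ℝ} (hr : ∀ p, r p = (pdT (pdS q) p / q p).re)
    {x : ℝ × ℝ × ℝ} (hx : 0 < x.2.2) (i j : Fin 2) :
    DifferentiableAt ℝ (fun y => Mmat q r y i j) x := by
  have hrd := diff_rC hq hq0 hr
  have htd := diff_pdTq hq
  fin_cases i <;> fin_cases j
  · show DifferentiableAt ℝ (fun y => Mmat q r y 0 0) x
    have h : (fun y => Mmat q r y 0 0) = fun y : ℝ×ℝ×ℝ =>
        (I / (2 * ((y.2.2:ℝ) : ℂ))) * ((fun p => -((r p : ℝ) : ℂ)) (y.1, y.2.1)) := by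
      funext y; simp [Mmat]
    rw [h]; exact (M_entry_hasFDeriv hrd.neg hx).1
  · show DifferentiableAt ℝ (fun y => Mmat q r y 0 1) x
    have h : (fun y => Mmat q r y 0 1) = fun y : ℝ×ℝ×ℝ =>
        (I / (2 * ((y.2.2:ℝ) : ℂ))) * ((fun p => -pdT q p) (y.1, y.2.1)) := by
      funext y; simp [Mmat]
    rw [h]; exact (M_entry_hasFDeriv htd.neg hx).1
  · show DifferentiableAt ℝ (fun y => Mmat q r y 1 0) x
    have h : (fun y => Mmat q r y 1 0) = fun y : ℝ×ℝ×ℝ =>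
        (I / (2 * ((y.2.2:ℝ) : ℂ))) * ((fun p => -(starRingEnd ℂ) (pdT q p)) (y.1, y.2.1)) := by
      funext y; simp [Mmat]
    rw [h]; exact (M_entry_hasFDeriv ((diff_conj htd).neg) hx).1
  · show DifferentiableAt ℝ (fun y => Mmat q r y 1 1) x
    have h : (fun y => Mmat q r y 1 1) = fun y : ℝ×ℝ×ℝ =>
        (I / (2 * ((y.2.2:ℝ) : ℂ))) * ((fun p => ((r p : ℝ) : ℂ)) (y.1, y.2.1)) := by
      funext y; simp [Mmat]
    rw [h]; exact (M_entry_hasFDeriv hrd hx).1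

lemma md_M_lam {q : ℝ × ℝ → ℂ} (hq : ContDiff ℝ (⊤ : ℕ∞) q) (hq0 : ∀ p, q p ≠ 0)
    {r : ℝ × ℝ → ℝ} (hr : ∀ p, r p = (pdT (pdS q) p / q p).re)
    {x : ℝ × ℝ × ℝ} (hx : 0 < x.2.2) :
    md (Mmat q r) ((0 : ℝ), (0 : ℝ), (1 : ℝ)) x = (-(x.2.2 : ℂ)⁻¹) • Mmat q r x := by
  have hrd := diff_rC hq hq0 hr
  have htd := diff_pdTq hq
  ext i j
  show fderiv ℝ (fun y => Mmat q r y i j) x _ = ((-(x.2.2 : ℂ)⁻¹) • Mmat q r x) i j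
  fin_cases i <;> fin_cases j
  · show fderiv ℝ (fun y => Mmat q r y 0 0) x ((0:ℝ),(0:ℝ),(1:ℝ))
        = ((-(x.2.2 : ℂ)⁻¹) • Mmat q r x) 0 0
    have h : (fun y => Mmat q r y 0 0) = fun y : ℝ×ℝ×ℝ =>
        (I / (2 * ((y.2.2:ℝ) : ℂ))) * ((fun p => -((r p : ℝ) : ℂ)) (y.1, y.2.1)) := by
      funext y; simp [Mmat]
    rw [h, (M_entry_hasFDeriv (g := fun p => -((r p : ℝ) : ℂ)) hrd.neg hx).2]
    simp [Mmat]
  · show fderiv ℝ (fun y => Mmat q r y 0 1) x ((0:ℝ),(0:ℝ),(1:ℝ))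
        = ((-(x.2.2 : ℂ)⁻¹) • Mmat q r x) 0 1
    have h : (fun y => Mmat q r y 0 1) = fun y : ℝ×ℝ×ℝ =>
        (I / (2 * ((y.2.2:ℝ) : ℂ))) * ((fun p => -pdT q p) (y.1, y.2.1)) := by
      funext y; simp [Mmat]
    rw [h, (M_entry_hasFDeriv (g := fun p => -pdT q p) htd.neg hx).2]
    simp [Mmat]
  · show fderiv ℝ (fun y => Mmat q r y 1 0) x ((0:ℝ),(0:ℝ),(1:ℝ))
        = ((-(x.2.2 : ℂ)⁻¹) • Mmat q r x) 1 0
    have h : (fun y => Mmat q r y 1 0) = fun y : ℝ×ℝ×ℝ =>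
        (I / (2 * ((y.2.2:ℝ) : ℂ))) * ((fun p => -(starRingEnd ℂ) (pdT q p)) (y.1, y.2.1)) := by
      funext y; simp [Mmat]
    rw [h, (M_entry_hasFDeriv (g := fun p => -(starRingEnd ℂ) (pdT q p)) ((diff_conj htd).neg) hx).2]
    simp [Mmat]
  · show fderiv ℝ (fun y => Mmat q r y 1 1) x ((0:ℝ),(0:ℝ),(1:ℝ))
        = ((-(x.2.2 : ℂ)⁻¹) • Mmat q r x) 1 1
    have h : (fun y => Mmat q r y 1 1) = fun y : ℝ×ℝ×ℝ =>
        (I / (2 * ((y.2.2:ℝ) : ℂ))) * ((fun p => ((r p : ℝ) : ℂ)) (y.1, y.2.1)) := by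
      funext y; simp [Mmat]
    rw [h, (M_entry_hasFDeriv hrd hx).2]
    simp [Mmat]

end Aux
set_option maxHeartbeats 2000000 in
/-- The Sym formula. -/
theorem sym_formula (q : ℝ × ℝ → ℂ) (hq : ContDiff ℝ (⊤ : ℕ∞) q) (hq0 : ∀ p, q p ≠ 0)
    (r : ℝ × ℝ → ℝ) (hr : ∀ p, r p = (pdT (pdS q) p / q p).re)
    (F : ℝ × ℝ × ℝ → Matrix (Fin 2) (Fin 2) ℂ)
    (hF : ∀ i j, ContDiffOn ℝ (⊤ : ℕ∞) (fun x => F x i j) {x : ℝ × ℝ × ℝ | 0 < x.2.2})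
    (hFinv : ∀ x : ℝ × ℝ × ℝ, 0 < x.2.2 → IsUnit (F x).det)
    (hLaxS : ∀ x : ℝ × ℝ × ℝ, 0 < x.2.2 →
      mpd3 F (1, 0, 0) x =
        F x * ((1 / 2 : ℂ) •
          !![I * (x.2.2 : ℂ), q (x.1, x.2.1);
             -(starRingEnd ℂ) (q (x.1, x.2.1)), -(I * (x.2.2 : ℂ))]))
    (hLaxT : ∀ x : ℝ × ℝ × ℝ, 0 < x.2.2 →
      mpd3 F (0, 1, 0) x =
        F x * ((I / (2 * (x.2.2 : ℂ))) •
          !![-(r (x.1, x.2.1) : ℂ), -pdT q (x.1, x.2.1);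
             -(starRingEnd ℂ) (pdT q (x.1, x.2.1)), (r (x.1, x.2.1) : ℂ)]))
    (lam0 : ℝ) (hlam0 : 0 < lam0)
    (γ : ℝ × ℝ → Matrix (Fin 2) (Fin 2) ℂ)
    (hγ : ∀ p : ℝ × ℝ,
      γ p = (lam0 : ℂ) • (mpd3 F (0, 0, 1) (p.1, p.2, lam0) * (F (p.1, p.2, lam0))⁻¹)) :
    ∀ p : ℝ × ℝ,
      mpdT (mpdS γ) p = mpdS γ p * mpdT γ p - mpdT γ p * mpdS γ p ∧
      (mpdS γ p * mpdS γ p).trace = -((lam0 : ℂ) ^ 2 / 2) := by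
  classical
  have hUopen : IsOpen {x : ℝ × ℝ × ℝ | 0 < x.2.2} :=
    isOpen_lt continuous_const (continuous_snd.snd)
  -- basic differentiability of entries of F
  have hFct : ∀ (i j : Fin 2) {x : ℝ × ℝ × ℝ}, 0 < x.2.2 →
      ContDiffAt ℝ (⊤ : ℕ∞) (fun y => F y i j) x := fun i j x hx =>
    (hF i j).contDiffAt (hUopen.mem_nhds hx)
  have hFd : ∀ {x : ℝ × ℝ × ℝ}, 0 < x.2.2 → ∀ i j,
      DifferentiableAt ℝ (fun y => F y i j) x := fun {x} hx i j =>
    (hFct i j hx).differentiableAt (by simp)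
  have hDF : ∀ {x : ℝ × ℝ × ℝ}, 0 < x.2.2 → ∀ i j,
      DifferentiableAt ℝ (fderiv ℝ (fun y => F y i j)) x := fun {x} hx i j =>
    ((hFct i j hx).fderiv_right (m := 1) (WithTop.coe_le_coe.mpr le_top)).differentiableAt (by simp)
  have hGd : ∀ {x : ℝ × ℝ × ℝ}, 0 < x.2.2 → ∀ (i j : Fin 2) (v : ℝ × ℝ × ℝ),
      DifferentiableAt ℝ (fun y => fderiv ℝ (fun z => F z i j) y v) x := by
    intro x hx i j v
    exact (ContinuousLinearMap.apply ℝ ℂ v).differentiableAt.comp x (hDF hx i j)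
  -- symmetry of second derivatives
  have hmix : ∀ {x : ℝ × ℝ × ℝ}, 0 < x.2.2 → ∀ (i j : Fin 2) (v w : ℝ × ℝ × ℝ),
      fderiv ℝ (fun y => fderiv ℝ (fun z => F z i j) y w) x v
        = fderiv ℝ (fun y => fderiv ℝ (fun z => F z i j) y v) x w := by
    intro x hx i j v w
    have hsym : IsSymmSndFDerivAt ℝ (fun z => F z i j) x :=
      (hFct i j hx).isSymmSndFDerivAt (by simp; exact WithTop.coe_le_coe.mpr le_top)
    have hc : ∀ u : ℝ × ℝ × ℝ, fderiv ℝ (fun y => fderiv ℝ (fun z => F z i j) y u) x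
        = (ContinuousLinearMap.apply ℝ ℂ u).comp
            (fderiv ℝ (fderiv ℝ (fun z => F z i j)) x) := by
      intro u
      exact ((ContinuousLinearMap.apply ℝ ℂ u).hasFDerivAt.comp x
        (hDF hx i j).hasFDerivAt).fderiv
    rw [hc w, hc v]
    simpa using hsym.eq v w
  intro p
  have hep : (0 : ℝ) < ((p.1, p.2, lam0) : ℝ × ℝ × ℝ).2.2 := hlam0
  -- the basic maps on ℝ²
  set Φ : ℝ × ℝ → Matrix (Fin 2) (Fin 2) ℂ := fun z => F (z.1, z.2, lam0) with hΦdef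
  set G2 : ℝ × ℝ → Matrix (Fin 2) (Fin 2) ℂ :=
    fun z => mpd3 F (0, 0, 1) (z.1, z.2, lam0) with hG2def
  set K : ℝ × ℝ → Matrix (Fin 2) (Fin 2) ℂ := fun z => (F (z.1, z.2, lam0))⁻¹ with hKdef
  have hγfun : γ = fun z => (lam0 : ℂ) • (G2 z * K z) := funext hγ
  -- entrywise differentiability on ℝ²
  have hΦd : ∀ (z : ℝ × ℝ) (i j : Fin 2), DifferentiableAt ℝ (fun w => Φ w i j) z := by
    intro z i j
    exact diff_comp_e (f := fun y => F y i j) (hFd hlam0 i j)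
  have hG2d : ∀ (z : ℝ × ℝ) (i j : Fin 2), DifferentiableAt ℝ (fun w => G2 w i j) z := by
    intro z i j
    exact diff_comp_e (f := fun y => fderiv ℝ (fun u => F u i j) y (0, 0, 1))
      (hGd hlam0 i j _)
  have hdetne : ∀ z : ℝ × ℝ, (Φ z).det ≠ 0 := by
    intro z
    exact (hFinv _ hlam0).ne_zero
  have hdetd : ∀ z : ℝ × ℝ, DifferentiableAt ℝ (fun w => (Φ w).det) z := by
    intro z
    have h : (fun w => (Φ w).det)
        = fun w => Φ w 0 0 * Φ w 1 1 - Φ w 0 1 * Φ w 1 0 := by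
      funext w; rw [Matrix.det_fin_two]
    rw [h]
    exact ((hΦd z 0 0).mul (hΦd z 1 1)).sub ((hΦd z 0 1).mul (hΦd z 1 0))
  have hKform : ∀ z : ℝ × ℝ, K z
      = (Φ z).det⁻¹ • !![Φ z 1 1, -Φ z 0 1; -Φ z 1 0, Φ z 0 0] := by
    intro z
    show (Φ z)⁻¹ = _
    rw [Matrix.inv_def, Matrix.adjugate_fin_two, Ring.inverse_eq_inv]
  have hKd : ∀ (z : ℝ × ℝ) (i j : Fin 2), DifferentiableAt ℝ (fun w => K w i j) z := by
    intro z i j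
    have h : (fun w => K w i j)
        = fun w => ((Φ w).det)⁻¹ * (!![Φ w 1 1, -Φ w 0 1; -Φ w 1 0, Φ w 0 0] i j) := by
      funext w; rw [hKform w]; simp
    rw [h]
    have hdi : DifferentiableAt ℝ (fun w => ((Φ w).det)⁻¹) z :=
      (hdetd z).inv (hdetne z)
    fin_cases i <;> fin_cases j
    · show DifferentiableAt ℝ (fun w => ((Φ w).det)⁻¹ * (!![Φ w 1 1, -Φ w 0 1; -Φ w 1 0, Φ w 0 0] 0 0)) z
      have h2 : (fun w => ((Φ w).det)⁻¹ * (!![Φ w 1 1, -Φ w 0 1; -Φ w 1 0, Φ w 0 0] 0 0))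
          = fun w => ((Φ w).det)⁻¹ * Φ w 1 1 := by funext w; simp
      rw [h2]; exact hdi.mul (hΦd z 1 1)
    · show DifferentiableAt ℝ (fun w => ((Φ w).det)⁻¹ * (!![Φ w 1 1, -Φ w 0 1; -Φ w 1 0, Φ w 0 0] 0 1)) z
      have h2 : (fun w => ((Φ w).det)⁻¹ * (!![Φ w 1 1, -Φ w 0 1; -Φ w 1 0, Φ w 0 0] 0 1))
          = fun w => ((Φ w).det)⁻¹ * (-Φ w 0 1) := by funext w; simp
      rw [h2]; exact hdi.mul (hΦd z 0 1).neg
    · show DifferentiableAt ℝ (fun w => ((Φ w).det)⁻¹ * (!![Φ w 1 1, -Φ w 0 1; -Φ w 1 0, Φ w 0 0] 1 0)) z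
      have h2 : (fun w => ((Φ w).det)⁻¹ * (!![Φ w 1 1, -Φ w 0 1; -Φ w 1 0, Φ w 0 0] 1 0))
          = fun w => ((Φ w).det)⁻¹ * (-Φ w 1 0) := by funext w; simp
      rw [h2]; exact hdi.mul (hΦd z 1 0).neg
    · show DifferentiableAt ℝ (fun w => ((Φ w).det)⁻¹ * (!![Φ w 1 1, -Φ w 0 1; -Φ w 1 0, Φ w 0 0] 1 1)) z
      have h2 : (fun w => ((Φ w).det)⁻¹ * (!![Φ w 1 1, -Φ w 0 1; -Φ w 1 0, Φ w 0 0] 1 1))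
          = fun w => ((Φ w).det)⁻¹ * Φ w 0 0 := by funext w; simp
      rw [h2]; exact hdi.mul (hΦd z 0 0)
  have hK1 : ∀ z : ℝ × ℝ, K z * Φ z = 1 := by
    intro z
    exact Matrix.nonsing_inv_mul _ (hFinv _ hlam0)
  have hK2 : ∀ z : ℝ × ℝ, Φ z * K z = 1 := by
    intro z
    exact Matrix.mul_nonsing_inv _ (hFinv _ hlam0)
  -- first-order Lax equations pulled back to ℝ²
  have hΦS : ∀ z : ℝ × ℝ, mpdS Φ z = Φ z * Lmat q (z.1, z.2, lam0) := by
    intro z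
    ext i j
    show fderiv ℝ (fun w => Φ w i j) z ((1 : ℝ), (0 : ℝ)) = _
    rw [chain_e (f := fun y => F y i j) (hFd hlam0 i j) ((1 : ℝ), (0 : ℝ))]
    have h := hLaxS (z.1, z.2, lam0) hlam0
    have h2 : fderiv ℝ (fun y => F y i j) (z.1, z.2, lam0) (1, 0, 0)
        = mpd3 F (1, 0, 0) (z.1, z.2, lam0) i j := rfl
    rw [show ((((1:ℝ), (0:ℝ)).1 : ℝ), (((1:ℝ), (0:ℝ)).2 : ℝ), (0:ℝ)) = ((1:ℝ),(0:ℝ),(0:ℝ)) from rfl]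
    rw [h2, h]
    rfl
  have hΦT : ∀ z : ℝ × ℝ, mpdT Φ z = Φ z * Mmat q r (z.1, z.2, lam0) := by
    intro z
    ext i j
    show fderiv ℝ (fun w => Φ w i j) z ((0 : ℝ), (1 : ℝ)) = _
    rw [chain_e (f := fun y => F y i j) (hFd hlam0 i j) ((0 : ℝ), (1 : ℝ))]
    have h := hLaxT (z.1, z.2, lam0) hlam0
    have h2 : fderiv ℝ (fun y => F y i j) (z.1, z.2, lam0) (0, 1, 0)
        = mpd3 F (0, 1, 0) (z.1, z.2, lam0) i j := rfl
    rw [show ((((0:ℝ), (1:ℝ)).1 : ℝ), (((0:ℝ), (1:ℝ)).2 : ℝ), (0:ℝ)) = ((0:ℝ),(1:ℝ),(0:ℝ)) from rfl]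
    rw [h2, h]
    rfl
  -- derivatives of K
  have hKgen : ∀ (z : ℝ × ℝ) (v : ℝ × ℝ), md K v z = -(K z * md Φ v z * K z) := by
    intro z v
    have h0 : md (fun w => K w * Φ w) v z = 0 := by
      have h : (fun w => K w * Φ w) = fun _ => (1 : Matrix (Fin 2) (Fin 2) ℂ) :=
        funext fun w => hK1 w
      rw [h, md_const]
    rw [md_mul v (hKd z) (hΦd z)] at h0
    have h1 : md K v z * Φ z = -(K z * md Φ v z) := by
      have := h0
      linear_combination (norm := noncomm_ring) this
    calc md K v z = md K v z * (Φ z * K z) := by rw [hK2 z, mul_one]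
    _ = (md K v z * Φ z) * K z := by rw [mul_assoc]
    _ = -(K z * md Φ v z) * K z := by rw [h1]
    _ = -(K z * md Φ v z * K z) := by noncomm_ring
  have hKS : ∀ z : ℝ × ℝ, mpdS K z = -(Lmat q (z.1, z.2, lam0) * K z) := by
    intro z
    have h : mpdS K z = md K ((1 : ℝ), (0 : ℝ)) z := rfl
    have h2 : md Φ ((1 : ℝ), (0 : ℝ)) z = mpdS Φ z := rfl
    rw [h, hKgen z _, h2, hΦS z]
    rw [show K z * (Φ z * Lmat q (z.1, z.2, lam0)) * K z
        = (K z * Φ z) * (Lmat q (z.1, z.2, lam0) * K z) by noncomm_ring, hK1 z, one_mul]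
  have hKT : ∀ z : ℝ × ℝ, mpdT K z = -(Mmat q r (z.1, z.2, lam0) * K z) := by
    intro z
    have h : mpdT K z = md K ((0 : ℝ), (1 : ℝ)) z := rfl
    have h2 : md Φ ((0 : ℝ), (1 : ℝ)) z = mpdT Φ z := rfl
    rw [h, hKgen z _, h2, hΦT z]
    rw [show K z * (Φ z * Mmat q r (z.1, z.2, lam0)) * K z
        = (K z * Φ z) * (Mmat q r (z.1, z.2, lam0) * K z) by noncomm_ring, hK1 z, one_mul]
  -- derivatives of G2 (second derivatives of F, using symmetry)
  have hG2S : ∀ z : ℝ × ℝ,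
      mpdS G2 z = G2 z * Lmat q (z.1, z.2, lam0) + Φ z * A0 := by
    intro z
    ext i j
    show fderiv ℝ (fun w => G2 w i j) z ((1 : ℝ), (0 : ℝ)) = _
    have hunf : (fun w : ℝ × ℝ => G2 w i j)
        = fun w : ℝ × ℝ => (fun y => fderiv ℝ (fun u => F u i j) y (0, 0, 1))
            (w.1, w.2, lam0) := rfl
    rw [hunf, chain_e (f := fun y => fderiv ℝ (fun u => F u i j) y (0, 0, 1)) (hGd hlam0 i j _)
      ((1 : ℝ), (0 : ℝ))]
    rw [show ((((1:ℝ), (0:ℝ)).1 : ℝ), (((1:ℝ), (0:ℝ)).2 : ℝ), (0:ℝ)) = ((1:ℝ),(0:ℝ),(0:ℝ)) from rfl]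
    rw [hmix hlam0 i j _ _]
    have hev : (fun y => fderiv ℝ (fun u => F u i j) y ((1:ℝ), (0:ℝ), (0:ℝ)))
        =ᶠ[nhds ((z.1, z.2, lam0) : ℝ × ℝ × ℝ)]
          (fun y => (F y * Lmat q y) i j) := by
      filter_upwards [hUopen.mem_nhds hep] with y hy
      have h := hLaxS y hy
      have h2 : fderiv ℝ (fun u => F u i j) y ((1:ℝ), (0:ℝ), (0:ℝ))
          = mpd3 F (1, 0, 0) y i j := rfl
      rw [h2, h]
      rfl
    rw [show fderiv ℝ (fun y => fderiv ℝ (fun u => F u i j) y ((1:ℝ),(0:ℝ),(0:ℝ)))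
          (z.1, z.2, lam0) ((0:ℝ),(0:ℝ),(1:ℝ))
        = fderiv ℝ (fun y => (F y * Lmat q y) i j) (z.1, z.2, lam0) ((0:ℝ),(0:ℝ),(1:ℝ)) by
      rw [hev.fderiv_eq]]
    have hmm : fderiv ℝ (fun y => (F y * Lmat q y) i j) (z.1, z.2, lam0) ((0:ℝ),(0:ℝ),(1:ℝ))
        = md (fun y => F y * Lmat q y) ((0:ℝ),(0:ℝ),(1:ℝ)) (z.1, z.2, lam0) i j := rfl
    rw [hmm, md_mul _ (hFd hlam0) (fun i j => diff_entry_L hq _ i j), md_L_lam hq]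
    rfl
  have hG2T : ∀ z : ℝ × ℝ,
      mpdT G2 z = G2 z * Mmat q r (z.1, z.2, lam0)
        + Φ z * ((-(lam0 : ℂ)⁻¹) • Mmat q r (z.1, z.2, lam0)) := by
    intro z
    ext i j
    show fderiv ℝ (fun w => G2 w i j) z ((0 : ℝ), (1 : ℝ)) = _
    have hunf : (fun w : ℝ × ℝ => G2 w i j)
        = fun w : ℝ × ℝ => (fun y => fderiv ℝ (fun u => F u i j) y (0, 0, 1))
            (w.1, w.2, lam0) := rfl
    rw [hunf, chain_e (f := fun y => fderiv ℝ (fun u => F u i j) y (0, 0, 1)) (hGd hlam0 i j _)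
      ((0 : ℝ), (1 : ℝ))]
    rw [show ((((0:ℝ), (1:ℝ)).1 : ℝ), (((0:ℝ), (1:ℝ)).2 : ℝ), (0:ℝ)) = ((0:ℝ),(1:ℝ),(0:ℝ)) from rfl]
    rw [hmix hlam0 i j _ _]
    have hev : (fun y => fderiv ℝ (fun u => F u i j) y ((0:ℝ), (1:ℝ), (0:ℝ)))
        =ᶠ[nhds ((z.1, z.2, lam0) : ℝ × ℝ × ℝ)]
          (fun y => (F y * Mmat q r y) i j) := by
      filter_upwards [hUopen.mem_nhds hep] with y hy
      have h := hLaxT y hy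
      have h2 : fderiv ℝ (fun u => F u i j) y ((0:ℝ), (1:ℝ), (0:ℝ))
          = mpd3 F (0, 1, 0) y i j := rfl
      rw [h2, h]
      rfl
    rw [show fderiv ℝ (fun y => fderiv ℝ (fun u => F u i j) y ((0:ℝ),(1:ℝ),(0:ℝ)))
          (z.1, z.2, lam0) ((0:ℝ),(0:ℝ),(1:ℝ))
        = fderiv ℝ (fun y => (F y * Mmat q r y) i j) (z.1, z.2, lam0) ((0:ℝ),(0:ℝ),(1:ℝ)) by
      rw [hev.fderiv_eq]]
    have hmm : fderiv ℝ (fun y => (F y * Mmat q r y) i j) (z.1, z.2, lam0) ((0:ℝ),(0:ℝ),(1:ℝ))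
        = md (fun y => F y * Mmat q r y) ((0:ℝ),(0:ℝ),(1:ℝ)) (z.1, z.2, lam0) i j := rfl
    have hz2 : (0 : ℝ) < ((z.1, z.2, lam0) : ℝ × ℝ × ℝ).2.2 := hlam0
    rw [hmm, md_mul _ (hFd hlam0) (fun i j => diff_entry_M hq hq0 hr hz2 i j),
      md_M_lam hq hq0 hr hz2]
    rfl
  -- ∂s γ and ∂t γ
  have hS : ∀ z : ℝ × ℝ,
      mpdS γ z = (lam0 : ℂ) • (Φ z * A0 * K z) := by
    intro z
    have h : mpdS γ z = md γ ((1 : ℝ), (0 : ℝ)) z := rfl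
    rw [h, hγfun, md_smul _ _ (fun i j => diffAt_entry_mul (hG2d z) (hKd z) i j),
      md_mul _ (hG2d z) (hKd z)]
    have e1 : md G2 ((1 : ℝ), (0 : ℝ)) z = mpdS G2 z := rfl
    have e2 : md K ((1 : ℝ), (0 : ℝ)) z = mpdS K z := rfl
    rw [e1, e2, hG2S z, hKS z]
    congr 1
    noncomm_ring
  have hT : ∀ z : ℝ × ℝ,
      mpdT γ z = -(Φ z * Mmat q r (z.1, z.2, lam0) * K z) := by
    intro z
    have h : mpdT γ z = md γ ((0 : ℝ), (1 : ℝ)) z := rfl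
    rw [h, hγfun, md_smul _ _ (fun i j => diffAt_entry_mul (hG2d z) (hKd z) i j),
      md_mul _ (hG2d z) (hKd z)]
    have e1 : md G2 ((0 : ℝ), (1 : ℝ)) z = mpdT G2 z := rfl
    have e2 : md K ((0 : ℝ), (1 : ℝ)) z = mpdT K z := rfl
    rw [e1, e2, hG2T z, hKT z]
    have hstep : (G2 z * Mmat q r (z.1, z.2, lam0)
          + Φ z * ((-(lam0 : ℂ)⁻¹) • Mmat q r (z.1, z.2, lam0))) * K z
        + G2 z * -(Mmat q r (z.1, z.2, lam0) * K z)
        = (-(lam0 : ℂ)⁻¹) • (Φ z * Mmat q r (z.1, z.2, lam0) * K z) := by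
      rw [Matrix.add_mul, Matrix.mul_smul, Matrix.smul_mul, mul_neg, ← mul_assoc]
      abel
    rw [hstep, smul_smul]
    have hl0 : (lam0 : ℂ) ≠ 0 := by
      simpa [Complex.ofReal_ne_zero] using ne_of_gt hlam0
    rw [show (lam0 : ℂ) * (-(lam0 : ℂ)⁻¹) = -1 by field_simp]
    simp
  -- conclusion
  have key : ∀ A B : Matrix (Fin 2) (Fin 2) ℂ,
      (Φ p * A * K p) * (Φ p * B * K p) = Φ p * A * B * K p := by
    intro A B
    calc (Φ p * A * K p) * (Φ p * B * K p)
        = Φ p * A * (K p * Φ p) * (B * K p) := by noncomm_ring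
      _ = Φ p * A * B * K p := by rw [hK1 p]; noncomm_ring
  have hSfun : mpdS γ = fun z => (lam0 : ℂ) • ((Φ z * A0) * K z) := funext hS
  have hPA : ∀ (z : ℝ × ℝ) (i j : Fin 2),
      DifferentiableAt ℝ (fun w => (Φ w * A0) i j) z := fun z i j =>
    diffAt_entry_mul (A := Φ) (B := fun _ => A0) (hΦd z)
      (fun i j => differentiableAt_const (A0 i j)) i j
  have hPAmd : md (fun z => Φ z * A0) ((0 : ℝ), (1 : ℝ)) p
      = Φ p * Mmat q r (p.1, p.2, lam0) * A0 := by
    have h := md_mul (A := Φ) (B := fun _ => A0) ((0 : ℝ), (1 : ℝ)) (hΦd p)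
      (fun i j => differentiableAt_const (A0 i j))
    rw [md_const] at h
    have h2 : md Φ ((0 : ℝ), (1 : ℝ)) p = mpdT Φ p := rfl
    rw [h2, hΦT p] at h
    rw [h]
    simp
  have hmain : mpdT (mpdS γ) p = mpdS γ p * mpdT γ p - mpdT γ p * mpdS γ p := by
    have h0 : mpdT (mpdS γ) p = md (mpdS γ) ((0 : ℝ), (1 : ℝ)) p := rfl
    rw [h0, hSfun,
      md_smul _ _ (fun i j => diffAt_entry_mul (A := fun w => Φ w * A0) (B := K)
        (hPA p) (hKd p) i j),
      md_mul _ (hPA p) (hKd p), hPAmd]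
    have e2 : md K ((0 : ℝ), (1 : ℝ)) p = mpdT K p := rfl
    rw [e2, hKT p]
    rw [hT p]
    have r1 : ((lam0 : ℂ) • (Φ p * A0 * K p)) * (-(Φ p * Mmat q r (p.1, p.2, lam0) * K p))
        = (lam0 : ℂ) • (-(Φ p * A0 * (Mmat q r (p.1, p.2, lam0)) * K p)) := by
      rw [Matrix.smul_mul, mul_neg, key]
    have r2 : (-(Φ p * Mmat q r (p.1, p.2, lam0) * K p)) * ((lam0 : ℂ) • (Φ p * A0 * K p))
        = (lam0 : ℂ) • (-(Φ p * Mmat q r (p.1, p.2, lam0) * A0 * K p)) := by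
      rw [Matrix.mul_smul, neg_mul, key]
    rw [r1, r2, ← smul_sub]
    congr 1
    noncomm_ring
  refine ⟨hmain, ?_⟩
  rw [hS p, Matrix.smul_mul, Matrix.mul_smul, smul_smul, key A0 A0,
    mul_assoc (Φ p) A0 A0, A0_sq, Matrix.mul_smul, Matrix.smul_mul, mul_one, hK2 p]
  simp [Matrix.trace_smul, Matrix.trace_one]
  ring
end
end

section
/- Let f, g : ℝ² × (0,∞) → ℂ be smooth with |f|² + |g|² > 0 everywhere, let e(s,t,λ) = exp( (i/2)(λ s + λ⁻¹ t) ), and define F : ℝ² × (0,∞) → M₂(ℂ) by F = (|f|² + |g|²)^{−1/2} · [[f e, −conj(g) e],[g conj(e), conj(f) conj(e)]]. Then for all (s,t,λ): (i) F is special unitary, i.e., F·conj(F)ᵀ = I and det F = 1; (ii) the matrix γ̃ = λ (∂λ F) F⁻¹ is trace-free skew-Hermitian, with entries γ̃₂₂ = −γ̃₁₁, γ̃₁₂ = −conj(γ̃₂₁), and (iii) γ̃₁₁ = (i/2)·( λ s − λ⁻¹ t + 2λ·Im( conj(f)·∂λ f + g·∂λ conj(g) )/(|f|² + |g|²) ) and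 γ̃₂₁ = λ·( conj(f)·∂λ g − g·∂λ conj(f) )·conj(e)² / (|f|² + |g|²), where conj(e)² = exp( −i(λ s + λ⁻¹ t) ). -/
noncomputable section
open Complex Matrix

/-- Partial derivative with respect to the third variable `λ` of a map on `ℝ × ℝ × ℝ`
(coordinates `(s, t, λ)`). -/
def pdL {E : Type*} [NormedAddCommGroup E] [NormedSpace ℝ E] (f : ℝ × ℝ × ℝ → E)
    (x : ℝ × ℝ × ℝ) : E :=
  fderiv ℝ f x (0, 0, 1)

/-- Entrywise partial `λ`-derivative of a matrix-valued map on `ℝ × ℝ × ℝ`. -/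
def mpdL (A : ℝ × ℝ × ℝ → Matrix (Fin 2) (Fin 2) ℂ) (x : ℝ × ℝ × ℝ) :
    Matrix (Fin 2) (Fin 2) ℂ :=
  Matrix.of fun i j => pdL (fun y => A y i j) x

/- ### Auxiliary lemmas: a small calculus for `pdL` -/

lemma pdL_fst (x : ℝ × ℝ × ℝ) : pdL (fun y : ℝ × ℝ × ℝ => y.1) x = 0 := by
  rw [pdL, fderiv_fst]; rfl

lemma pdL_snd_fst (x : ℝ × ℝ × ℝ) : pdL (fun y : ℝ × ℝ × ℝ => y.2.1) x = 0 := by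
  rw [pdL, show (fun y : ℝ × ℝ × ℝ => y.2.1) = (Prod.fst ∘ Prod.snd) from rfl]
  rw [fderiv_comp _ differentiableAt_fst differentiableAt_snd, fderiv_fst, fderiv_snd]; rfl

lemma pdL_snd_snd (x : ℝ × ℝ × ℝ) : pdL (fun y : ℝ × ℝ × ℝ => y.2.2) x = 1 := by
  rw [pdL, show (fun y : ℝ × ℝ × ℝ => y.2.2) = (Prod.snd ∘ Prod.snd) from rfl]
  rw [fderiv_comp _ differentiableAt_snd differentiableAt_snd, fderiv_snd, fderiv_snd]; rfl

lemma pdL_const {E : Type*} [NormedAddCommGroup E] [NormedSpace ℝ E] (c : E)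
    (x : ℝ × ℝ × ℝ) : pdL (fun _ => c) x = 0 := by
  rw [pdL, fderiv_fun_const]; rfl

lemma pdL_mul {𝔸 : Type*} [NormedCommRing 𝔸] [NormedAlgebra ℝ 𝔸] {a b : ℝ × ℝ × ℝ → 𝔸}
    {x : ℝ × ℝ × ℝ} (ha : DifferentiableAt ℝ a x) (hb : DifferentiableAt ℝ b x) :
    pdL (fun y => a y * b y) x = pdL a x * b x + a x * pdL b x := by
  rw [pdL, fderiv_fun_mul ha hb]; simp [pdL, smul_eq_mul]; ring

lemma pdL_add {E : Type*} [NormedAddCommGroup E] [NormedSpace ℝ E] {a b : ℝ × ℝ × ℝ → E}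
    {x : ℝ × ℝ × ℝ} (ha : DifferentiableAt ℝ a x) (hb : DifferentiableAt ℝ b x) :
    pdL (fun y => a y + b y) x = pdL a x + pdL b x := by
  rw [pdL, fderiv_fun_add ha hb]; rfl

lemma pdL_neg {E : Type*} [NormedAddCommGroup E] [NormedSpace ℝ E] {a : ℝ × ℝ × ℝ → E}
    {x : ℝ × ℝ × ℝ} : pdL (fun y => -(a y)) x = -pdL a x := by
  rw [pdL, fderiv_fun_neg]; rfl

lemma pdL_conj (a : ℝ × ℝ × ℝ → ℂ) (x : ℝ × ℝ × ℝ) :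
    pdL (fun y => (starRingEnd ℂ) (a y)) x = (starRingEnd ℂ) (pdL a x) := by
  rw [pdL, show (fun y => (starRingEnd ℂ) (a y)) = (⇑Complex.conjCLE ∘ a) from rfl,
    Complex.conjCLE.comp_fderiv]; rfl

lemma pdL_ofReal {a : ℝ × ℝ × ℝ → ℝ} {x : ℝ × ℝ × ℝ} (ha : DifferentiableAt ℝ a x) :
    pdL (fun y => ((a y : ℝ) : ℂ)) x = ((pdL a x : ℝ) : ℂ) := by
  rw [pdL, pdL, show (fun y => ((a y : ℝ) : ℂ)) = ⇑Complex.ofRealCLM ∘ a from rfl,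
    (Complex.ofRealCLM.hasFDerivAt.comp x ha.hasFDerivAt).fderiv]
  simp

lemma pdL_re {a : ℝ × ℝ × ℝ → ℂ} {x : ℝ × ℝ × ℝ} (ha : DifferentiableAt ℝ a x) :
    pdL (fun y => (a y).re) x = (pdL a x).re := by
  rw [pdL, pdL, show (fun y => (a y).re) = ⇑Complex.reCLM ∘ a from rfl,
    (Complex.reCLM.hasFDerivAt.comp x ha.hasFDerivAt).fderiv]
  simp

lemma pdL_exp {a : ℝ × ℝ × ℝ → ℂ} {x : ℝ × ℝ × ℝ} (ha : DifferentiableAt ℝ a x) :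
    pdL (fun y => Complex.exp (a y)) x = Complex.exp (a x) * pdL a x := by
  rw [pdL, (ha.hasFDerivAt.cexp).fderiv]; simp [pdL, smul_eq_mul]

lemma pdL_inv {a : ℝ × ℝ × ℝ → ℝ} {x : ℝ × ℝ × ℝ} (ha : DifferentiableAt ℝ a x)
    (h0 : a x ≠ 0) : pdL (fun y => (a y)⁻¹) x = -pdL a x / (a x) ^ 2 := by
  rw [pdL, show (fun y => (a y)⁻¹) = Inv.inv ∘ a from rfl,
    ((hasFDerivAt_inv h0).comp x ha.hasFDerivAt).fderiv]
  simp [pdL, smul_eq_mul]; ring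

lemma pdL_sqrt {a : ℝ × ℝ × ℝ → ℝ} {x : ℝ × ℝ × ℝ} (ha : DifferentiableAt ℝ a x)
    (h0 : a x ≠ 0) : pdL (fun y => Real.sqrt (a y)) x = pdL a x / (2 * Real.sqrt (a x)) := by
  rw [pdL, (ha.hasFDerivAt.sqrt h0).fderiv]; simp [pdL, smul_eq_mul]; ring

lemma diff_norm_sq {a : ℝ × ℝ × ℝ → ℂ} {x : ℝ × ℝ × ℝ} (ha : DifferentiableAt ℝ a x) :
    DifferentiableAt ℝ (fun y => ‖a y‖ ^ 2) x := by
  have h1 : (fun y => ‖a y‖ ^ 2) = fun y => (a y * (starRingEnd ℂ) (a y)).re := by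
    funext y; rw [Complex.mul_conj']; norm_cast
  rw [h1]
  exact Complex.reCLM.differentiableAt.comp x (ha.mul ha.star)

lemma pdL_norm_sq {a : ℝ × ℝ × ℝ → ℂ} {x : ℝ × ℝ × ℝ} (ha : DifferentiableAt ℝ a x) :
    pdL (fun y => ‖a y‖ ^ 2) x
      = (pdL a x * (starRingEnd ℂ) (a x) + a x * (starRingEnd ℂ) (pdL a x)).re := by
  have h1 : (fun y => ‖a y‖ ^ 2) = fun y => (a y * (starRingEnd ℂ) (a y)).re := by
    funext y; rw [Complex.mul_conj']; norm_cast
  have hs : DifferentiableAt ℝ (fun y => (starRingEnd ℂ) (a y)) x := ha.star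
  rw [h1, pdL_re (a := fun y => a y * (starRingEnd ℂ) (a y)) (ha.mul hs), pdL_mul ha hs, pdL_conj]

/- ### Auxiliary algebraic lemmas over `ℂ` -/

lemma alg00 (γA fx cf gx cg Pf cPf Pg cPg ex iex Q L S T D M R' : ℂ)
    (hL : L ≠ 0) (hR0 : R' ≠ 0)
    (hQ : Q ^ 2 = R') (hRv : R' = fx * cf + gx * cg)
    (hie : ex * iex = 1)
    (hD : D = (Pf * cf + fx * cPf) + (Pg * cg + gx * cPg))
    (hM : 2 * M * I = cf * Pf + gx * cPg - (fx * cPf + cg * Pg))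
    (hγ : γA = L * (((-(D / (2 * Q)) / Q ^ 2) * (fx * ex)
          + Q⁻¹ * (Pf * ex + fx * (ex * (I / 2 * (S - T / L ^ 2)))))
        * (Q⁻¹ * (cf * iex))
      + (-((-(D / (2 * Q)) / Q ^ 2) * (cg * ex)
          + Q⁻¹ * (cPg * ex + cg * (ex * (I / 2 * (S - T / L ^ 2))))))
        * (-(Q⁻¹ * (gx * iex))))) :
    γA = I / 2 * (L * S - L⁻¹ * T + 2 * L * M / R') := by
  have hQi4 : (Q⁻¹) ^ 4 = (R' ^ 2)⁻¹ := by rw [inv_pow, ← hQ]; ring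
  have hQi2 : (Q⁻¹) ^ 2 = R'⁻¹ := by rw [inv_pow, hQ]
  have h1 : (((-(D / (2 * Q)) / Q ^ 2) * (fx * ex)
          + Q⁻¹ * (Pf * ex + fx * (ex * (I / 2 * (S - T / L ^ 2)))))
        * (Q⁻¹ * (cf * iex))
      + (-((-(D / (2 * Q)) / Q ^ 2) * (cg * ex)
          + Q⁻¹ * (cPg * ex + cg * (ex * (I / 2 * (S - T / L ^ 2))))))
        * (-(Q⁻¹ * (gx * iex))))
      = (ex * iex) * (-(D / 2) * (fx * cf + gx * cg) * (Q⁻¹) ^ 4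
        + (Pf * cf + gx * cPg + (fx * cf + gx * cg) * (I / 2 * (S - T / L ^ 2))) * (Q⁻¹) ^ 2) := by
    ring
  rw [hγ, h1, hie, one_mul, hQi4, hQi2, ← hRv]
  field_simp [hL, hR0]
  linear_combination (-(L ^ 2)) * hD + (-(L ^ 2)) * hM

lemma alg11 (γA fx cf gx cg Pf cPf Pg cPg ex iex Q L S T D M R' : ℂ)
    (hL : L ≠ 0) (hR0 : R' ≠ 0)
    (hQ : Q ^ 2 = R') (hRv : R' = fx * cf + gx * cg)
    (hie : ex * iex = 1)
    (hD : D = (Pf * cf + fx * cPf) + (Pg * cg + gx * cPg))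
    (hM : 2 * M * I = cf * Pf + gx * cPg - (fx * cPf + cg * Pg))
    (hγ : γA = L * (((-(D / (2 * Q)) / Q ^ 2) * (gx * iex)
          + Q⁻¹ * (Pg * iex + gx * (iex * (-(I / 2) * (S - T / L ^ 2)))))
        * (Q⁻¹ * (cg * ex))
      + ((-(D / (2 * Q)) / Q ^ 2) * (cf * iex)
          + Q⁻¹ * (cPf * iex + cf * (iex * (-(I / 2) * (S - T / L ^ 2)))))
        * (Q⁻¹ * (fx * ex)))) :
    γA = -(I / 2 * (L * S - L⁻¹ * T + 2 * L * M / R')) := by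
  have hQi4 : (Q⁻¹) ^ 4 = (R' ^ 2)⁻¹ := by rw [inv_pow, ← hQ]; ring
  have hQi2 : (Q⁻¹) ^ 2 = R'⁻¹ := by rw [inv_pow, hQ]
  have h1 : (((-(D / (2 * Q)) / Q ^ 2) * (gx * iex)
          + Q⁻¹ * (Pg * iex + gx * (iex * (-(I / 2) * (S - T / L ^ 2)))))
        * (Q⁻¹ * (cg * ex))
      + ((-(D / (2 * Q)) / Q ^ 2) * (cf * iex)
          + Q⁻¹ * (cPf * iex + cf * (iex * (-(I / 2) * (S - T / L ^ 2)))))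
        * (Q⁻¹ * (fx * ex)))
      = (ex * iex) * (-(D / 2) * (fx * cf + gx * cg) * (Q⁻¹) ^ 4
        + (Pg * cg + fx * cPf - (fx * cf + gx * cg) * (I / 2 * (S - T / L ^ 2))) * (Q⁻¹) ^ 2) := by
    ring
  rw [hγ, h1, hie, one_mul, hQi4, hQi2, ← hRv]
  field_simp [hL, hR0]
  linear_combination (-(L ^ 2)) * hD + (L ^ 2) * hM

lemma alg10 (γA fx cf gx cg Pf cPf Pg cPg ex iex Q L S T D R' : ℂ)
    (hQ : Q ^ 2 = R')
    (hγ : γA = L * (((-(D / (2 * Q)) / Q ^ 2) * (gx * iex)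
          + Q⁻¹ * (Pg * iex + gx * (iex * (-(I / 2) * (S - T / L ^ 2)))))
        * (Q⁻¹ * (cf * iex))
      + ((-(D / (2 * Q)) / Q ^ 2) * (cf * iex)
          + Q⁻¹ * (cPf * iex + cf * (iex * (-(I / 2) * (S - T / L ^ 2)))))
        * (-(Q⁻¹ * (gx * iex))))) :
    γA = L * (cf * Pg - gx * cPf) * iex ^ 2 / R' := by
  have hQi2 : (Q⁻¹) ^ 2 = R'⁻¹ := by rw [inv_pow, hQ]
  have h1 : (((-(D / (2 * Q)) / Q ^ 2) * (gx * iex)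
          + Q⁻¹ * (Pg * iex + gx * (iex * (-(I / 2) * (S - T / L ^ 2)))))
        * (Q⁻¹ * (cf * iex))
      + ((-(D / (2 * Q)) / Q ^ 2) * (cf * iex)
          + Q⁻¹ * (cPf * iex + cf * (iex * (-(I / 2) * (S - T / L ^ 2)))))
        * (-(Q⁻¹ * (gx * iex))))
      = (cf * Pg - gx * cPf) * iex ^ 2 * (Q⁻¹) ^ 2 := by
    ring
  rw [hγ, h1, hQi2]
  rw [div_eq_mul_inv]; ring

lemma alg01 (γA fx cf gx cg Pf cPf Pg cPg ex iex Q L S T D R' : ℂ)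
    (hQ : Q ^ 2 = R')
    (hγ : γA = L * (((-(D / (2 * Q)) / Q ^ 2) * (fx * ex)
          + Q⁻¹ * (Pf * ex + fx * (ex * (I / 2 * (S - T / L ^ 2)))))
        * (Q⁻¹ * (cg * ex))
      + (-((-(D / (2 * Q)) / Q ^ 2) * (cg * ex)
          + Q⁻¹ * (cPg * ex + cg * (ex * (I / 2 * (S - T / L ^ 2))))))
        * (Q⁻¹ * (fx * ex)))) :
    γA = L * (cg * Pf - fx * cPg) * ex ^ 2 / R' := by
  have hQi2 : (Q⁻¹) ^ 2 = R'⁻¹ := by rw [inv_pow, hQ]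
  have h1 : (((-(D / (2 * Q)) / Q ^ 2) * (fx * ex)
          + Q⁻¹ * (Pf * ex + fx * (ex * (I / 2 * (S - T / L ^ 2)))))
        * (Q⁻¹ * (cg * ex))
      + (-((-(D / (2 * Q)) / Q ^ 2) * (cg * ex)
          + Q⁻¹ * (cPg * ex + cg * (ex * (I / 2 * (S - T / L ^ 2))))))
        * (Q⁻¹ * (fx * ex)))
      = (cg * Pf - fx * cPg) * ex ^ 2 * (Q⁻¹) ^ 2 := by
    ring
  rw [hγ, h1, hQi2]
  rw [div_eq_mul_inv]; ring

lemma su2 (a b : ℂ) (h : a * (starRingEnd ℂ) a + b * (starRingEnd ℂ) b = 1) :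
    !![a, -(starRingEnd ℂ) b; b, (starRingEnd ℂ) a] *
      !![a, -(starRingEnd ℂ) b; b, (starRingEnd ℂ) a]ᴴ = 1 ∧
    (!![a, -(starRingEnd ℂ) b; b, (starRingEnd ℂ) a]).det = 1 := by
  constructor
  · ext i j
    fin_cases i <;> fin_cases j <;>
      simp [Matrix.mul_apply, Fin.sum_univ_two, Matrix.conjTranspose_apply, Matrix.one_apply,
        map_neg, Complex.conj_conj]
    · linear_combination h
    · ring
    · ring
    · linear_combination h
  · rw [Matrix.det_fin_two_of]
    linear_combination h

/-- The Sym formula applied to the normalized wave function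
`F = (|f|² + |g|²)^{−1/2}·[[f e, −conj(g) e],[g conj(e), conj(f) conj(e)]]`, with
`e = exp((i/2)(λs + λ⁻¹t))`: `F` is special unitary, and `γ̃ = λ(∂λ F)F⁻¹` is trace-free
skew-Hermitian with the stated explicit entries. -/
theorem normalized_wave_function_sym (f g : ℝ × ℝ × ℝ → ℂ)
    (hf : ContDiffOn ℝ (⊤ : ℕ∞) f {x : ℝ × ℝ × ℝ | 0 < x.2.2})
    (hg : ContDiffOn ℝ (⊤ : ℕ∞) g {x : ℝ × ℝ × ℝ | 0 < x.2.2})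
    (hfg : ∀ x : ℝ × ℝ × ℝ, 0 < x.2.2 → 0 < ‖f x‖ ^ 2 + ‖g x‖ ^ 2)
    (e : ℝ × ℝ × ℝ → ℂ)
    (he : ∀ x : ℝ × ℝ × ℝ,
      e x = Complex.exp (I / 2 * ((x.2.2 : ℂ) * (x.1 : ℂ) + (x.2.2 : ℂ)⁻¹ * (x.2.1 : ℂ))))
    (F : ℝ × ℝ × ℝ → Matrix (Fin 2) (Fin 2) ℂ)
    (hF : ∀ x : ℝ × ℝ × ℝ,
      F x = ((Real.sqrt (‖f x‖ ^ 2 + ‖g x‖ ^ 2))⁻¹ : ℂ) •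
        !![f x * e x, -(starRingEnd ℂ) (g x) * e x;
           g x * (starRingEnd ℂ) (e x), (starRingEnd ℂ) (f x) * (starRingEnd ℂ) (e x)])
    (γ' : ℝ × ℝ × ℝ → Matrix (Fin 2) (Fin 2) ℂ)
    (hγ' : ∀ x : ℝ × ℝ × ℝ, γ' x = (x.2.2 : ℂ) • (mpdL F x * (F x)⁻¹)) :
    ∀ x : ℝ × ℝ × ℝ, 0 < x.2.2 →
      -- (i) `F` is special unitary
      (F x * (F x)ᴴ = 1 ∧ (F x).det = 1) ∧
      -- (ii) `γ̃` is trace-free skew-Hermitian, `γ̃₂₂ = −γ̃₁₁`, `γ̃₁₂ = −conj(γ̃₂₁)`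
      ((γ' x).trace = 0 ∧ (γ' x)ᴴ = -(γ' x) ∧
        γ' x 1 1 = -(γ' x 0 0) ∧ γ' x 0 1 = -(starRingEnd ℂ) (γ' x 1 0)) ∧
      -- (iii) the explicit entries of `γ̃`
      (γ' x 0 0 = I / 2 *
          ((x.2.2 : ℂ) * (x.1 : ℂ) - (x.2.2 : ℂ)⁻¹ * (x.2.1 : ℂ) +
            2 * (x.2.2 : ℂ) *
              ((((starRingEnd ℂ) (f x) * pdL f x +
                  g x * pdL (fun y => (starRingEnd ℂ) (g y)) x).im : ℝ) : ℂ) /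
              ((‖f x‖ ^ 2 + ‖g x‖ ^ 2 : ℝ) : ℂ)) ∧
        γ' x 1 0 = (x.2.2 : ℂ) *
          ((starRingEnd ℂ) (f x) * pdL g x -
            g x * pdL (fun y => (starRingEnd ℂ) (f y)) x) *
          ((starRingEnd ℂ) (e x)) ^ 2 / ((‖f x‖ ^ 2 + ‖g x‖ ^ 2 : ℝ) : ℂ)) := by
  intro x hx
  simp only [pdL_conj]
  -- basic nonvanishing facts
  have hopen : IsOpen {y : ℝ × ℝ × ℝ | 0 < y.2.2} :=
    isOpen_lt continuous_const (continuous_snd.comp continuous_snd)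
  have hmem : {y : ℝ × ℝ × ℝ | 0 < y.2.2} ∈ nhds x := hopen.mem_nhds hx
  have hdf : DifferentiableAt ℝ f x := (hf.contDiffAt hmem).differentiableAt (by simp)
  have hdg : DifferentiableAt ℝ g x := (hg.contDiffAt hmem).differentiableAt (by simp)
  have hdcf : DifferentiableAt ℝ (fun y => (starRingEnd ℂ) (f y)) x := hdf.star
  have hdcg : DifferentiableAt ℝ (fun y => (starRingEnd ℂ) (g y)) x := hdg.star
  have hl0 : x.2.2 ≠ 0 := ne_of_gt hx
  have hlC : ((x.2.2 : ℝ) : ℂ) ≠ 0 := by exact_mod_cast hl0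
  have hR : (0 : ℝ) < ‖f x‖ ^ 2 + ‖g x‖ ^ 2 := hfg x hx
  have hRne : ‖f x‖ ^ 2 + ‖g x‖ ^ 2 ≠ 0 := ne_of_gt hR
  have hq0 : Real.sqrt (‖f x‖ ^ 2 + ‖g x‖ ^ 2) ≠ 0 :=
    ne_of_gt (Real.sqrt_pos.mpr hR)
  have hQ0 : ((Real.sqrt (‖f x‖ ^ 2 + ‖g x‖ ^ 2) : ℝ) : ℂ) ≠ 0 := by exact_mod_cast hq0
  have hR0 : ((‖f x‖ ^ 2 + ‖g x‖ ^ 2 : ℝ) : ℂ) ≠ 0 := by exact_mod_cast hRne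
  have hQ2 : ((Real.sqrt (‖f x‖ ^ 2 + ‖g x‖ ^ 2) : ℝ) : ℂ) ^ 2
      = ((‖f x‖ ^ 2 + ‖g x‖ ^ 2 : ℝ) : ℂ) := by
    rw [← Complex.ofReal_pow, Real.sq_sqrt hR.le]
  have hRv : ((‖f x‖ ^ 2 + ‖g x‖ ^ 2 : ℝ) : ℂ)
      = f x * (starRingEnd ℂ) (f x) + g x * (starRingEnd ℂ) (g x) := by
    push_cast
    rw [← Complex.mul_conj', ← Complex.mul_conj']
  have hee : e x * (starRingEnd ℂ) (e x) = 1 := by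
    rw [he x, ← Complex.exp_conj, ← Complex.exp_add]
    have h2 : (starRingEnd ℂ) (I / 2 * ((x.2.2 : ℂ) * (x.1 : ℂ) + (x.2.2 : ℂ)⁻¹ * (x.2.1 : ℂ)))
        = -(I / 2 * ((x.2.2 : ℂ) * (x.1 : ℂ) + (x.2.2 : ℂ)⁻¹ * (x.2.1 : ℂ))) := by
      simp only [_root_.map_mul, map_add, map_div₀, Complex.conj_I, Complex.conj_ofReal, map_inv₀,
        map_ofNat]
      ring
    rw [h2, add_neg_cancel, Complex.exp_zero]
  -- the normalization factor as a function
  set c : ℝ × ℝ × ℝ → ℂ :=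
    fun y => (((Real.sqrt (‖f y‖ ^ 2 + ‖g y‖ ^ 2))⁻¹ : ℝ) : ℂ) with hcdef
  have hcx : c x = ((Real.sqrt (‖f x‖ ^ 2 + ‖g x‖ ^ 2) : ℝ) : ℂ)⁻¹ := by
    rw [hcdef]; push_cast; ring
  -- the four entries of `F` as functions
  have hF00fun : (fun y => F y 0 0) = fun y => c y * (f y * e y) := by
    funext y; rw [hF y, hcdef]
    simp [Matrix.smul_apply, smul_eq_mul, Complex.ofReal_inv]
  have hF01fun : (fun y => F y 0 1) = fun y => -(c y * ((starRingEnd ℂ) (g y) * e y)) := by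
    funext y; rw [hF y, hcdef]
    simp [Matrix.smul_apply, smul_eq_mul, Complex.ofReal_inv]
    try ring
  have hF10fun : (fun y => F y 1 0) = fun y => c y * (g y * (starRingEnd ℂ) (e y)) := by
    funext y; rw [hF y, hcdef]
    simp [Matrix.smul_apply, smul_eq_mul, Complex.ofReal_inv]
  have hF11fun : (fun y => F y 1 1)
      = fun y => c y * ((starRingEnd ℂ) (f y) * (starRingEnd ℂ) (e y)) := by
    funext y; rw [hF y, hcdef]
    simp [Matrix.smul_apply, smul_eq_mul, Complex.ofReal_inv]
  -- part (i): `F` is special unitary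
  have hab : (((Real.sqrt (‖f x‖ ^ 2 + ‖g x‖ ^ 2) : ℝ) : ℂ)⁻¹ * (f x * e x))
        * (starRingEnd ℂ) (((Real.sqrt (‖f x‖ ^ 2 + ‖g x‖ ^ 2) : ℝ) : ℂ)⁻¹ * (f x * e x))
      + (((Real.sqrt (‖f x‖ ^ 2 + ‖g x‖ ^ 2) : ℝ) : ℂ)⁻¹ * (g x * (starRingEnd ℂ) (e x)))
        * (starRingEnd ℂ) (((Real.sqrt (‖f x‖ ^ 2 + ‖g x‖ ^ 2) : ℝ) : ℂ)⁻¹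
            * (g x * (starRingEnd ℂ) (e x))) = 1 := by
    have h3 : (((Real.sqrt (‖f x‖ ^ 2 + ‖g x‖ ^ 2) : ℝ) : ℂ)⁻¹ * (f x * e x))
        * (starRingEnd ℂ) (((Real.sqrt (‖f x‖ ^ 2 + ‖g x‖ ^ 2) : ℝ) : ℂ)⁻¹ * (f x * e x))
      + (((Real.sqrt (‖f x‖ ^ 2 + ‖g x‖ ^ 2) : ℝ) : ℂ)⁻¹ * (g x * (starRingEnd ℂ) (e x)))
        * (starRingEnd ℂ) (((Real.sqrt (‖f x‖ ^ 2 + ‖g x‖ ^ 2) : ℝ) : ℂ)⁻¹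
            * (g x * (starRingEnd ℂ) (e x)))
        = (f x * (starRingEnd ℂ) (f x) + g x * (starRingEnd ℂ) (g x))
          * (e x * (starRingEnd ℂ) (e x))
          * (((Real.sqrt (‖f x‖ ^ 2 + ‖g x‖ ^ 2) : ℝ) : ℂ)⁻¹
            * ((Real.sqrt (‖f x‖ ^ 2 + ‖g x‖ ^ 2) : ℝ) : ℂ)⁻¹) := by
      simp only [_root_.map_mul, map_inv₀, Complex.conj_ofReal, Complex.conj_conj]
      ring
    rw [h3, hee, mul_one, ← hRv,
      show ((Real.sqrt (‖f x‖ ^ 2 + ‖g x‖ ^ 2) : ℝ) : ℂ)⁻¹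
          * ((Real.sqrt (‖f x‖ ^ 2 + ‖g x‖ ^ 2) : ℝ) : ℂ)⁻¹
        = (((Real.sqrt (‖f x‖ ^ 2 + ‖g x‖ ^ 2) : ℝ) : ℂ) ^ 2)⁻¹ by
          rw [← mul_inv, ← sq], hQ2]
    all_goals exact mul_inv_cancel₀ hR0
  have hFx : F x = !![((Real.sqrt (‖f x‖ ^ 2 + ‖g x‖ ^ 2) : ℝ) : ℂ)⁻¹ * (f x * e x),
      -(starRingEnd ℂ) (((Real.sqrt (‖f x‖ ^ 2 + ‖g x‖ ^ 2) : ℝ) : ℂ)⁻¹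
        * (g x * (starRingEnd ℂ) (e x)));
      ((Real.sqrt (‖f x‖ ^ 2 + ‖g x‖ ^ 2) : ℝ) : ℂ)⁻¹ * (g x * (starRingEnd ℂ) (e x)),
      (starRingEnd ℂ) (((Real.sqrt (‖f x‖ ^ 2 + ‖g x‖ ^ 2) : ℝ) : ℂ)⁻¹ * (f x * e x))] := by
    rw [hF x]
    ext i j
    fin_cases i <;> fin_cases j <;>
      simp [Matrix.smul_apply, smul_eq_mul, _root_.map_mul, map_inv₀, Complex.conj_ofReal,
        Complex.conj_conj, Complex.ofReal_inv] <;>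
      try ring
  have hsu := su2 _ _ hab
  have hFu : F x * (F x)ᴴ = 1 := by rw [hFx]; exact hsu.1
  have hFdet : (F x).det = 1 := by rw [hFx]; exact hsu.2
  have hFinv : (F x)⁻¹ = (F x)ᴴ := Matrix.inv_eq_right_inv hFu
  -- differentiability of `e` and of the normalization
  have hdψ : DifferentiableAt ℝ (fun y : ℝ × ℝ × ℝ => y.2.2 * y.1 + y.2.2⁻¹ * y.2.1) x :=
    ((differentiableAt_snd.snd).mul differentiableAt_fst).add
      (show DifferentiableAt ℝ (fun y : ℝ × ℝ × ℝ => y.2.2⁻¹ * y.2.1) x from ((show DifferentiableAt ℝ (fun y : ℝ × ℝ × ℝ => y.2.2) x from differentiableAt_snd.snd).fun_inv hl0).fun_mul (show DifferentiableAt ℝ (fun y : ℝ × ℝ × ℝ => y.2.1) x from differentiableAt_snd.fst))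
  have hdψC : DifferentiableAt ℝ
      (fun y : ℝ × ℝ × ℝ => ((y.2.2 * y.1 + y.2.2⁻¹ * y.2.1 : ℝ) : ℂ)) x :=
    Complex.ofRealCLM.differentiableAt.comp x hdψ
  have heFun : e = fun y => Complex.exp (I / 2 * ((y.2.2 * y.1 + y.2.2⁻¹ * y.2.1 : ℝ) : ℂ)) := by
    funext y; rw [he y]; congr 1; push_cast; ring
  have hde : DifferentiableAt ℝ e x := by
    rw [heFun]; exact ((differentiableAt_const _).mul hdψC).cexp
  have hdce : DifferentiableAt ℝ (fun y => (starRingEnd ℂ) (e y)) x := hde.star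
  have hdr : DifferentiableAt ℝ (fun y => ‖f y‖ ^ 2 + ‖g y‖ ^ 2) x :=
    (diff_norm_sq hdf).add (diff_norm_sq hdg)
  have hdsq : DifferentiableAt ℝ (fun y => Real.sqrt (‖f y‖ ^ 2 + ‖g y‖ ^ 2)) x :=
    hdr.sqrt hRne
  have hdinv : DifferentiableAt ℝ (fun y => (Real.sqrt (‖f y‖ ^ 2 + ‖g y‖ ^ 2))⁻¹) x :=
    hdsq.inv hq0
  have hdc : DifferentiableAt ℝ c x := by
    rw [hcdef]; exact Complex.ofRealCLM.differentiableAt.comp x hdinv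
  -- derivative of `e`
  have hψ' : pdL (fun y : ℝ × ℝ × ℝ => y.2.2 * y.1 + y.2.2⁻¹ * y.2.1) x
      = x.1 - x.2.1 / x.2.2 ^ 2 := by
    rw [pdL_add ((differentiableAt_snd.snd).fun_mul differentiableAt_fst)
        (show DifferentiableAt ℝ (fun y : ℝ × ℝ × ℝ => y.2.2⁻¹ * y.2.1) x from ((show DifferentiableAt ℝ (fun y : ℝ × ℝ × ℝ => y.2.2) x from differentiableAt_snd.snd).fun_inv hl0).fun_mul (show DifferentiableAt ℝ (fun y : ℝ × ℝ × ℝ => y.2.1) x from differentiableAt_snd.fst)),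
      pdL_mul (differentiableAt_snd.snd) differentiableAt_fst,
      pdL_mul ((show DifferentiableAt ℝ (fun y : ℝ × ℝ × ℝ => y.2.2) x from differentiableAt_snd.snd).fun_inv hl0) (show DifferentiableAt ℝ (fun y : ℝ × ℝ × ℝ => y.2.1) x from differentiableAt_snd.fst),
      pdL_inv (show DifferentiableAt ℝ (fun y : ℝ × ℝ × ℝ => y.2.2) x from differentiableAt_snd.snd) hl0,
      pdL_fst, pdL_snd_fst, pdL_snd_snd]
    ring
  have he2 : pdL e x = e x * (I / 2 * ((x.1 : ℂ) - (x.2.1 : ℂ) / (x.2.2 : ℂ) ^ 2)) := by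
    conv_lhs => rw [heFun]
    rw [pdL_exp ((differentiableAt_const _).fun_mul hdψC),
      pdL_mul (differentiableAt_const _) hdψC, pdL_const, pdL_ofReal hdψ, hψ',
      show Complex.exp (I / 2 * ((x.2.2 * x.1 + x.2.2⁻¹ * x.2.1 : ℝ) : ℂ)) = e x from
        (congrFun heFun x).symm]
    push_cast
    ring
  have hce2 : pdL (fun y => (starRingEnd ℂ) (e y)) x
      = (starRingEnd ℂ) (e x) * (-(I / 2) * ((x.1 : ℂ) - (x.2.1 : ℂ) / (x.2.2 : ℂ) ^ 2)) := by
    rw [pdL_conj, he2]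
    simp only [_root_.map_mul, map_sub, map_div₀, map_pow, Complex.conj_I, Complex.conj_ofReal,
      map_ofNat]
    ring
  -- derivative of the norm-square and the normalization
  have hDc : ((pdL (fun y => ‖f y‖ ^ 2 + ‖g y‖ ^ 2) x : ℝ) : ℂ)
      = (pdL f x * (starRingEnd ℂ) (f x) + f x * (starRingEnd ℂ) (pdL f x))
        + (pdL g x * (starRingEnd ℂ) (g x) + g x * (starRingEnd ℂ) (pdL g x)) := by
    have sc : ∀ z w : ℂ, (((z * (starRingEnd ℂ) w + w * (starRingEnd ℂ) z).re : ℝ) : ℂ)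
        = z * (starRingEnd ℂ) w + w * (starRingEnd ℂ) z := by
      intro z w
      refine Complex.conj_eq_iff_re.mp ?_
      simp only [map_add, _root_.map_mul, Complex.conj_conj]
      ring
    rw [pdL_add (diff_norm_sq hdf) (diff_norm_sq hdg), pdL_norm_sq hdf, pdL_norm_sq hdg,
      Complex.ofReal_add, sc (pdL f x) (f x), sc (pdL g x) (g x)]
  have hc2 : pdL c x
      = -(((pdL (fun y => ‖f y‖ ^ 2 + ‖g y‖ ^ 2) x : ℝ) : ℂ)
          / (2 * ((Real.sqrt (‖f x‖ ^ 2 + ‖g x‖ ^ 2) : ℝ) : ℂ)))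
        / ((Real.sqrt (‖f x‖ ^ 2 + ‖g x‖ ^ 2) : ℝ) : ℂ) ^ 2 := by
    rw [hcdef]
    rw [pdL_ofReal hdinv, pdL_inv hdsq hq0, pdL_sqrt hdr hRne]
    push_cast
    ring
  -- the entry derivatives of `F`
  have hd00 : pdL (fun y => F y 0 0) x
      = pdL c x * (f x * e x) + c x * (pdL f x * e x + f x * pdL e x) := by
    rw [hF00fun, pdL_mul hdc (hdf.fun_mul hde), pdL_mul hdf hde]
  have hd01 : pdL (fun y => F y 0 1) x
      = -(pdL c x * ((starRingEnd ℂ) (g x) * e x)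
        + c x * ((starRingEnd ℂ) (pdL g x) * e x + (starRingEnd ℂ) (g x) * pdL e x)) := by
    rw [hF01fun, pdL_neg, pdL_mul hdc (hdcg.fun_mul hde), pdL_mul hdcg hde, pdL_conj]
  have hd10 : pdL (fun y => F y 1 0) x
      = pdL c x * (g x * (starRingEnd ℂ) (e x))
        + c x * (pdL g x * (starRingEnd ℂ) (e x)
          + g x * pdL (fun y => (starRingEnd ℂ) (e y)) x) := by
    rw [hF10fun, pdL_mul hdc (hdg.fun_mul hdce), pdL_mul hdg hdce]
  have hd11 : pdL (fun y => F y 1 1)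
      x = pdL c x * ((starRingEnd ℂ) (f x) * (starRingEnd ℂ) (e x))
        + c x * ((starRingEnd ℂ) (pdL f x) * (starRingEnd ℂ) (e x)
          + (starRingEnd ℂ) (f x) * pdL (fun y => (starRingEnd ℂ) (e y)) x) := by
    rw [hF11fun, pdL_mul hdc (hdcf.fun_mul hdce), pdL_mul hdcf hdce, pdL_conj]
  -- conjugates of the entries of `F`
  have hcF00 : (starRingEnd ℂ) (F x 0 0)
      = ((Real.sqrt (‖f x‖ ^ 2 + ‖g x‖ ^ 2) : ℝ) : ℂ)⁻¹
        * ((starRingEnd ℂ) (f x) * (starRingEnd ℂ) (e x)) := by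
    rw [show F x 0 0 = c x * (f x * e x) from congrFun hF00fun x, hcx]
    simp [_root_.map_mul, map_inv₀, Complex.conj_ofReal]
  have hcF01 : (starRingEnd ℂ) (F x 0 1)
      = -(((Real.sqrt (‖f x‖ ^ 2 + ‖g x‖ ^ 2) : ℝ) : ℂ)⁻¹
        * (g x * (starRingEnd ℂ) (e x))) := by
    rw [show F x 0 1 = -(c x * ((starRingEnd ℂ) (g x) * e x)) from congrFun hF01fun x, hcx]
    simp [_root_.map_mul, map_inv₀, Complex.conj_ofReal, Complex.conj_conj]
    try ring
  have hcF10 : (starRingEnd ℂ) (F x 1 0)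
      = ((Real.sqrt (‖f x‖ ^ 2 + ‖g x‖ ^ 2) : ℝ) : ℂ)⁻¹
        * ((starRingEnd ℂ) (g x) * e x) := by
    rw [show F x 1 0 = c x * (g x * (starRingEnd ℂ) (e x)) from congrFun hF10fun x, hcx]
    simp [_root_.map_mul, map_inv₀, Complex.conj_ofReal, Complex.conj_conj]
  have hcF11 : (starRingEnd ℂ) (F x 1 1)
      = ((Real.sqrt (‖f x‖ ^ 2 + ‖g x‖ ^ 2) : ℝ) : ℂ)⁻¹ * (f x * e x) := by
    rw [show F x 1 1 = c x * ((starRingEnd ℂ) (f x) * (starRingEnd ℂ) (e x)) from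
      congrFun hF11fun x, hcx]
    simp [_root_.map_mul, map_inv₀, Complex.conj_ofReal, Complex.conj_conj]
  -- the entries of `γ'`
  have hent : ∀ i j : Fin 2, γ' x i j
      = (x.2.2 : ℂ) * (pdL (fun y => F y i 0) x * (starRingEnd ℂ) (F x j 0)
        + pdL (fun y => F y i 1) x * (starRingEnd ℂ) (F x j 1)) := by
    intro i j
    rw [hγ' x, hFinv]
    rw [Matrix.smul_apply, Matrix.mul_apply, Fin.sum_univ_two]
    simp [mpdL, Matrix.conjTranspose_apply, smul_eq_mul, Complex.star_def]
  -- relation for the imaginary part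
  have hMc : 2 * ((((starRingEnd ℂ) (f x) * pdL f x
          + g x * (starRingEnd ℂ) (pdL g x)).im : ℝ) : ℂ) * I
      = (starRingEnd ℂ) (f x) * pdL f x + g x * (starRingEnd ℂ) (pdL g x)
        - (f x * (starRingEnd ℂ) (pdL f x) + (starRingEnd ℂ) (g x) * pdL g x) := by
    have h := Complex.sub_conj ((starRingEnd ℂ) (f x) * pdL f x
      + g x * (starRingEnd ℂ) (pdL g x))
    simp only [map_add, _root_.map_mul, Complex.conj_conj] at h
    push_cast at h
    linear_combination -h
  -- the four closed forms
  have h00 : γ' x 0 0 = I / 2 *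
      ((x.2.2 : ℂ) * (x.1 : ℂ) - (x.2.2 : ℂ)⁻¹ * (x.2.1 : ℂ) +
        2 * (x.2.2 : ℂ) *
          ((((starRingEnd ℂ) (f x) * pdL f x
            + g x * (starRingEnd ℂ) (pdL g x)).im : ℝ) : ℂ) /
          ((‖f x‖ ^ 2 + ‖g x‖ ^ 2 : ℝ) : ℂ)) := by
    refine alg00 _ (f x) ((starRingEnd ℂ) (f x)) (g x) ((starRingEnd ℂ) (g x))
      (pdL f x) ((starRingEnd ℂ) (pdL f x)) (pdL g x) ((starRingEnd ℂ) (pdL g x))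
      (e x) ((starRingEnd ℂ) (e x)) _ _ _ _ _ _ _ hlC hR0 hQ2 hRv hee hDc hMc ?_
    rw [hent 0 0, hd00, hd01, hcF00, hcF01, hc2, hcx, he2]
    try ring
  have h11 : γ' x 1 1 = -(I / 2 *
      ((x.2.2 : ℂ) * (x.1 : ℂ) - (x.2.2 : ℂ)⁻¹ * (x.2.1 : ℂ) +
        2 * (x.2.2 : ℂ) *
          ((((starRingEnd ℂ) (f x) * pdL f x
            + g x * (starRingEnd ℂ) (pdL g x)).im : ℝ) : ℂ) /
          ((‖f x‖ ^ 2 + ‖g x‖ ^ 2 : ℝ) : ℂ))) := by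
    refine alg11 _ (f x) ((starRingEnd ℂ) (f x)) (g x) ((starRingEnd ℂ) (g x))
      (pdL f x) ((starRingEnd ℂ) (pdL f x)) (pdL g x) ((starRingEnd ℂ) (pdL g x))
      (e x) ((starRingEnd ℂ) (e x)) _ _ _ _ _ _ _ hlC hR0 hQ2 hRv hee hDc hMc ?_
    rw [hent 1 1, hd10, hd11, hcF10, hcF11, hc2, hcx, hce2]
    try ring
  have h10 : γ' x 1 0 = (x.2.2 : ℂ) *
      ((starRingEnd ℂ) (f x) * pdL g x - g x * (starRingEnd ℂ) (pdL f x)) *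
      ((starRingEnd ℂ) (e x)) ^ 2 / ((‖f x‖ ^ 2 + ‖g x‖ ^ 2 : ℝ) : ℂ) := by
    refine alg10 _ (f x) ((starRingEnd ℂ) (f x)) (g x) ((starRingEnd ℂ) (g x))
      (pdL f x) ((starRingEnd ℂ) (pdL f x)) (pdL g x) ((starRingEnd ℂ) (pdL g x))
      (e x) ((starRingEnd ℂ) (e x)) ((Real.sqrt (‖f x‖ ^ 2 + ‖g x‖ ^ 2) : ℝ) : ℂ) (x.2.2 : ℂ) (x.1 : ℂ) (x.2.1 : ℂ)
      ((pdL (fun y => ‖f y‖ ^ 2 + ‖g y‖ ^ 2) x : ℝ) : ℂ)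
      ((‖f x‖ ^ 2 + ‖g x‖ ^ 2 : ℝ) : ℂ) hQ2 ?_
    rw [hent 1 0, hd10, hd11, hcF00, hcF01, hc2, hcx, hce2]
    try ring
  have h01 : γ' x 0 1 = (x.2.2 : ℂ) *
      ((starRingEnd ℂ) (g x) * pdL f x - f x * (starRingEnd ℂ) (pdL g x)) *
      (e x) ^ 2 / ((‖f x‖ ^ 2 + ‖g x‖ ^ 2 : ℝ) : ℂ) := by
    refine alg01 _ (f x) ((starRingEnd ℂ) (f x)) (g x) ((starRingEnd ℂ) (g x))
      (pdL f x) ((starRingEnd ℂ) (pdL f x)) (pdL g x) ((starRingEnd ℂ) (pdL g x))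
      (e x) ((starRingEnd ℂ) (e x)) ((Real.sqrt (‖f x‖ ^ 2 + ‖g x‖ ^ 2) : ℝ) : ℂ) (x.2.2 : ℂ) (x.1 : ℂ) (x.2.1 : ℂ)
      ((pdL (fun y => ‖f y‖ ^ 2 + ‖g y‖ ^ 2) x : ℝ) : ℂ)
      ((‖f x‖ ^ 2 + ‖g x‖ ^ 2 : ℝ) : ℂ) hQ2 ?_
    rw [hent 0 1, hd00, hd01, hcF10, hcF11, hc2, hcx, he2]
    try ring
  refine ⟨⟨hFu, hFdet⟩, ⟨?_, ?_, ?_, ?_⟩, h00, h10⟩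
  · rw [Matrix.trace_fin_two, h00, h11]
    ring
  · ext i j
    fin_cases i <;> fin_cases j <;>
      simp only [Matrix.conjTranspose_apply, Matrix.neg_apply, Complex.star_def,
        Fin.zero_eta, Fin.mk_one, Fin.isValue]
    · rw [h00]
      simp only [_root_.map_mul, map_add, map_sub, map_div₀, map_inv₀, Complex.conj_I,
        Complex.conj_ofReal, map_ofNat]
      ring
    · rw [h10, h01]
      simp only [_root_.map_mul, map_sub, map_div₀, map_pow, Complex.conj_conj, Complex.conj_ofReal]
      ring
    · rw [h01, h10]
      simp only [_root_.map_mul, map_sub, map_div₀, map_pow, Complex.conj_conj, Complex.conj_ofReal]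
      ring
    · rw [h11]
      simp only [map_neg, _root_.map_mul, map_add, map_sub, map_div₀, map_inv₀, Complex.conj_I,
        Complex.conj_ofReal, map_ofNat]
      ring
  · rw [h11, h00]
  · rw [h01, h10]
    simp only [_root_.map_mul, map_sub, map_div₀, map_pow, Complex.conj_conj, Complex.conj_ofReal]
    ring
end
end

section
/- Let q : ℝ² → ℂ be smooth and nowhere zero, and set r = Re( (∂t∂s q)/q ). Assume Im( (∂t∂s q)/q ) = 0 and ∂s r = −(1/2) ∂t(|q|²) everywhere. Then ∂s( r² + |∂t q|² ) = 0 everywhere; that is, the function r² + |∂t q|² depends only on t. -/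
noncomputable section
open Complex

-- smoothness of directional derivative
lemma pd_smooth (f : ℝ × ℝ → ℂ) (hf : ContDiff ℝ (⊤ : ℕ∞) f) (v : ℝ × ℝ) :
    ContDiff ℝ (⊤ : ℕ∞) (fun x => fderiv ℝ f x v) :=
  (hf.fderiv_right (by simp)).clm_apply contDiff_const

-- re of derivative
lemma pd_re (f : ℝ × ℝ → ℂ) (p : ℝ × ℝ) (hf : DifferentiableAt ℝ f p) (v : ℝ × ℝ) :
    fderiv ℝ (fun x => (f x).re) p v = (fderiv ℝ f p v).re := by
  have : (fun x => (f x).re) = Complex.reCLM ∘ f := rfl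
  rw [this, fderiv_comp p Complex.reCLM.differentiableAt hf]
  simp

lemma pd_im (f : ℝ × ℝ → ℂ) (p : ℝ × ℝ) (hf : DifferentiableAt ℝ f p) (v : ℝ × ℝ) :
    fderiv ℝ (fun x => (f x).im) p v = (fderiv ℝ f p v).im := by
  have : (fun x => (f x).im) = Complex.imCLM ∘ f := rfl
  rw [this, fderiv_comp p Complex.imCLM.differentiableAt hf]
  simp

lemma sq_fderiv (g : ℝ × ℝ → ℝ) (p : ℝ × ℝ) (hg : DifferentiableAt ℝ g p) (v : ℝ × ℝ) :
    fderiv ℝ (fun x => g x ^ 2) p v = 2 * g p * fderiv ℝ g p v := by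
  have : (fun x => g x ^ 2) = fun x => g x * g x := by ext x; ring
  rw [this, fderiv_fun_mul hg hg]
  simp; ring

lemma normsq_fderiv (f : ℝ × ℝ → ℂ) (p : ℝ × ℝ) (hf : DifferentiableAt ℝ f p) (v : ℝ × ℝ) :
    fderiv ℝ (fun x => ‖f x‖ ^ 2) p v
      = 2 * ((starRingEnd ℂ) (f p) * fderiv ℝ f p v).re := by
  have h : (fun x => ‖f x‖ ^ 2) = fun x => (f x).re ^ 2 + (f x).im ^ 2 := by
    ext x
    rw [Complex.sq_norm, Complex.normSq_apply]; ring
  have hre : DifferentiableAt ℝ (fun x => (f x).re) p := (Complex.reCLM.differentiableAt).comp p hf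
  have him : DifferentiableAt ℝ (fun x => (f x).im) p := (Complex.imCLM.differentiableAt).comp p hf
  rw [h, fderiv_fun_add (by exact (hre.pow 2)) (by exact (him.pow 2))]
  simp only [ContinuousLinearMap.add_apply]
  rw [sq_fderiv _ _ hre, sq_fderiv _ _ him, pd_re f p hf, pd_im f p hf]
  simp [Complex.mul_re]
  ring

lemma pd_symm (q : ℝ × ℝ → ℂ) (hq : ContDiff ℝ (⊤ : ℕ∞) q) (p : ℝ × ℝ) :
    pdS (pdT q) p = pdT (pdS q) p := by
  have hdq : DifferentiableAt ℝ (fderiv ℝ q) p :=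
    ((hq.fderiv_right (m := (⊤ : ℕ∞)) (by simp)).differentiable (by simp)).differentiableAt
  have h1 : ∀ v w : ℝ × ℝ, fderiv ℝ (fun x => fderiv ℝ q x v) p w
      = fderiv ℝ (fderiv ℝ q) p w v := by
    intro v w
    rw [show (fun x => fderiv ℝ q x v) = fun x => (fderiv ℝ q x) ((fun _ : ℝ × ℝ => v) x) from
      rfl, fderiv_clm_apply hdq (differentiableAt_const v)]
    simp
  have hsym := (hq.contDiffAt (x := p)).isSymmSndFDerivAt (by rw [minSmoothness_of_isRCLikeNormedField]; exact WithTop.coe_le_coe.mpr le_top)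
  show fderiv ℝ (fun x => fderiv ℝ q x (0,1)) p (1,0)
      = fderiv ℝ (fun x => fderiv ℝ q x (1,0)) p (0,1)
  rw [h1, h1, hsym]

/-- If a smooth nowhere-zero `q : ℝ² → ℂ` satisfies `Im((∂t∂s q)/q) = 0` and
`∂s Re((∂t∂s q)/q) = −(1/2)∂t(|q|²)` (the integrated Pohlmeyer-Lund-Regge equation), then
`∂s(r² + |∂t q|²) = 0` everywhere, where `r = Re((∂t∂s q)/q)`. -/
theorem plr_time_speed_conserved (q : ℝ × ℝ → ℂ)
    (hq : ContDiff ℝ (⊤ : ℕ∞) q) (hq0 : ∀ p, q p ≠ 0)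
    (r : ℝ × ℝ → ℝ) (hr : ∀ p, r p = (pdT (pdS q) p / q p).re)
    (him : ∀ p, (pdT (pdS q) p / q p).im = 0)
    (hre : ∀ p, pdS r p = -(1 / 2) * pdT (fun x => ‖q x‖ ^ 2) p) :
    ∀ p : ℝ × ℝ, pdS (fun x => r x ^ 2 + ‖pdT q x‖ ^ 2) p = 0 := by
  intro p
  have hqs : ContDiff ℝ (⊤ : ℕ∞) (pdS q) := pd_smooth q hq (1, 0)
  have hts : ContDiff ℝ (⊤ : ℕ∞) (pdT (pdS q)) := pd_smooth (pdS q) hqs (0, 1)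
  have hReq : r = fun x => (pdT (pdS q) x / q x).re := funext hr
  have hRc : ContDiff ℝ (⊤ : ℕ∞) (fun x => (pdT (pdS q) x / q x).re) := by
    simp only [div_eq_mul_inv]
    exact Complex.reCLM.contDiff.comp (hts.mul (hq.inv hq0))
  have hdr : DifferentiableAt ℝ r p := by
    rw [hReq]; exact (hRc.differentiable (by simp)).differentiableAt
  have hdT : DifferentiableAt ℝ (pdT q) p :=
    ((pd_smooth q hq (0, 1)).differentiable (by simp)).differentiableAt
  have hdq : DifferentiableAt ℝ q p := (hq.differentiable (by simp)).differentiableAt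
  have hkey : pdT (pdS q) p = (r p : ℂ) * q p := by
    have hz : pdT (pdS q) p / q p = ((r p : ℝ) : ℂ) :=
      Complex.ext (by rw [hr p]; simp) (by simp [him p])
    calc pdT (pdS q) p = (pdT (pdS q) p / q p) * q p := (div_mul_cancel₀ _ (hq0 p)).symm
      _ = (r p : ℂ) * q p := by rw [hz]
  have hN : (fun x => ‖pdT q x‖ ^ 2) = fun x => (pdT q x).re ^ 2 + (pdT q x).im ^ 2 := by
    ext x; rw [Complex.sq_norm, Complex.normSq_apply]; ring
  have hd2 : DifferentiableAt ℝ (fun x => ‖pdT q x‖ ^ 2) p := by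
    rw [hN]
    exact (((Complex.reCLM.differentiableAt.comp p hdT)).pow 2).add
      ((Complex.imCLM.differentiableAt.comp p hdT).pow 2)
  have hsplit : pdS (fun x => r x ^ 2 + ‖pdT q x‖ ^ 2) p
      = fderiv ℝ (fun x => r x ^ 2) p (1, 0) + fderiv ℝ (fun x => ‖pdT q x‖ ^ 2) p (1, 0) := by
    show fderiv ℝ (fun x => r x ^ 2 + ‖pdT q x‖ ^ 2) p (1, 0) = _
    rw [fderiv_fun_add (f := fun x => r x ^ 2) (hdr.pow 2) hd2]; rfl
  have hA := sq_fderiv r p hdr (1, 0)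
  have hB := normsq_fderiv (pdT q) p hdT (1, 0)
  have hC := normsq_fderiv q p hdq (0, 1)
  have hS : fderiv ℝ (pdT q) p (1, 0) = (r p : ℂ) * q p := by
    rw [show fderiv ℝ (pdT q) p (1, 0) = pdS (pdT q) p from rfl, pd_symm q hq p, hkey]
  have hRs : fderiv ℝ r p (1, 0) = -(1 / 2) * (2 * ((starRingEnd ℂ) (q p) * fderiv ℝ q p (0, 1)).re) := by
    rw [show fderiv ℝ r p (1, 0) = pdS r p from rfl, hre p,
      show pdT (fun x => ‖q x‖ ^ 2) p = fderiv ℝ (fun x => ‖q x‖ ^ 2) p (0, 1) from rfl, hC]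
  rw [hsplit, hA, hB, hS, hRs]
  have : fderiv ℝ q p (0, 1) = pdT q p := rfl
  rw [this]
  simp [Complex.mul_re, Complex.conj_re, Complex.conj_im]
  ring
end
end
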